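/- arXiv:2510.08103 — 2 statements merged into one kernel-verified Lean document; each statement's English description precedes it below -/
import Mathlib

section
/- For every point of P_{v,w} and every i ∈ I, the reflected collection V̄ (consisting of the spaces V̄_i^a := Ker Φ_i^a and V̄_j^a := V_j^a for j ≠ i, with the maps x̄, Ā, B̄ described in the context and all other maps unchanged) satisfies relations (R1), (R2), (R3) and (R4); that is, V̄ is a point of P_{v̄,w}, where v̄_i^a := dim Ker Φ_i^a and v̄_j^a := v_j^a for j ≠ i. -/
/- Common setup: (graded, generalized) quiver varieties attached to a symmetrized
Cartan matrix, following Neguț, "Extremal monomials of q-characters". -/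

open Module LinearMap Finset

namespace QChar

variable {I : Type} [Fintype I] [DecidableEq I]

/-- The Cartan integer `c_{ij} = 2 d_{ij} / d_{ii}`. -/
def cc (d : I → I → ℤ) (i j : I) : ℤ := 2 * d i j / d i i

/-- `d_i = d_{ii} / 2`. -/
def dl (d : I → I → ℤ) (i : I) : ℤ := d i i / 2

/-- The number `−c_{ij}` (as a natural number), i.e. the cardinality of `L(i,j)`. -/
def cnat (d : I → I → ℤ) (i j : I) : ℕ := (-(cc d i j)).toNat

/-- The assumptions on the symmetrized Cartan matrix `d = (d_{ij})`. -/
structure CartanData (d : I → I → ℤ) : Prop where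
  symm : ∀ i j, d i j = d j i
  pos : ∀ i, 0 < d i i
  even : ∀ i, Even (d i i)
  offdiag : ∀ i j, i ≠ j → d i j ≤ 0
  dvd : ∀ i j, d i i ∣ 2 * d i j

/-- `ℓ`-fold composition of a linear endomap (the maps `x_{i,i}^{(ℓ),a}`). -/
def lpow {M : Type} [AddCommGroup M] [Module ℂ M] (f : M →ₗ[ℂ] M) : ℕ → M →ₗ[ℂ] M
  | 0 => LinearMap.id
  | n + 1 => f ∘ₗ lpow f n

section Rep

variable (d : I → I → ℤ) (v w : I → ℤ → ℕ)
    (Vt : I → Type) [∀ i, AddCommGroup (Vt i)] [∀ i, Module ℂ (Vt i)]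
    (Wt : I → Type) [∀ i, AddCommGroup (Wt i)] [∀ i, Module ℂ (Wt i)]
    (Vg : ∀ i : I, ℤ → Submodule ℂ (Vt i)) (Wg : ∀ i : I, ℤ → Submodule ℂ (Wt i))
    (x : ∀ j i : I, Vt i →ₗ[ℂ] Vt j) (A : ∀ i : I, Wt i →ₗ[ℂ] Vt i)
    (B : ∀ i : I, Vt i →ₗ[ℂ] Wt i)

/-- A point of `P_{v,w}` : each total space `Vt i = ⊕_a V_i^a`, `Wt i = ⊕_a W_i^a` is the
internal direct sum of its graded pieces, `dim V_i^a = v_i^a`, `dim W_i^a = w_i^a`, the maps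
`x_{j,i} : V_i^a → V_j^{a-d_{ij}}`, `A_i : W_i^a → V_i^{a+d_i}`, `B_i : V_i^{a-d_i} → W_i^a`
respect the gradings, and the relations (R1), (R2), (R3), (R4) hold. -/
def IsRep : Prop :=
  (∀ i, FiniteDimensional ℂ (Vt i)) ∧
  (∀ i, FiniteDimensional ℂ (Wt i)) ∧
  (∀ i, DirectSum.IsInternal (Vg i)) ∧
  (∀ i, DirectSum.IsInternal (Wg i)) ∧
  (∀ i a, Module.finrank ℂ (Vg i a) = v i a) ∧
  (∀ i a, Module.finrank ℂ (Wg i a) = w i a) ∧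
  (∀ j i a, (Vg i a).map (x j i) ≤ Vg j (a - d i j)) ∧
  (∀ i a, (Wg i a).map (A i) ≤ Vg i (a + dl d i)) ∧
  (∀ i a, (Vg i a).map (B i) ≤ Wg i (a + dl d i)) ∧
  (∀ i j, i ≠ j →
    lpow (x j j) (cnat d j i) ∘ₗ x j i + x j i ∘ₗ lpow (x i i) (cnat d i j) = 0) ∧
  (∀ i, (∑ j ∈ Finset.univ.erase i, ∑ ℓ ∈ Finset.range (cnat d i j),
      lpow (x i i) (cnat d i j - 1 - ℓ) ∘ₗ x i j ∘ₗ x j i ∘ₗ lpow (x i i) ℓ)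
      + A i ∘ₗ B i = 0) ∧
  (∀ i, x i i ∘ₗ A i = 0) ∧
  (∀ i, B i ∘ₗ x i i = 0)

/-- A subrepresentation: subspaces `U_i^a ⊆ V_i^a` preserved by all the maps `x`. -/
def IsSubrep (U : ∀ i : I, ℤ → Submodule ℂ (Vt i)) : Prop :=
  (∀ i a, U i a ≤ Vg i a) ∧ (∀ j i a, (U i a).map (x j i) ≤ U j (a - d i j))

/-- The pairing `(θ, u) = ∑_i d_i θ_i u_i`, where `u_i = ∑_a u_i^a`. -/
noncomputable def pairθ (d : I → I → ℤ) (θ : I → ℝ) (u : I → ℤ → ℤ) : ℝ :=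
  ∑ i : I, (dl d i : ℝ) * θ i * ∑ᶠ a : ℤ, (u i a : ℝ)

/-- The dimension vector of a collection of subspaces. -/
noncomputable def dimv (U : ∀ i : I, ℤ → Submodule ℂ (Vt i)) : I → ℤ → ℤ :=
  fun i a => (Module.finrank ℂ (U i a) : ℤ)

/-- `θ`-stability: subrepresentations contained in `Ker B` pair nonpositively with `θ`, and
subrepresentations containing `Im A` satisfy `(θ, v - dim U) ≥ 0`. -/
def IsStable (θ : I → ℝ) : Prop :=
  (∀ U : ∀ i : I, ℤ → Submodule ℂ (Vt i), IsSubrep d Vt Vg x U →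
    (∀ i a, (U i a).map (B i) = ⊥) → pairθ d θ (dimv Vt U) ≤ 0) ∧
  (∀ U : ∀ i : I, ℤ → Submodule ℂ (Vt i), IsSubrep d Vt Vg x U →
    (∀ i a, (Wg i a).map (A i) ≤ U i (a + dl d i)) →
    0 ≤ pairθ d θ (fun i a => (v i a : ℤ) - dimv Vt U i a))

/-- The map `Φ_i : D_i → V_i` (all `Φ_i^a` at once); the component of the domain indexed by
`(j, k)` (with `k + 1` running through `1, …, −c_{ij}`) is the summand `V_j^{a+ℓ d_{ii}}` of
`D_i^a`, where `ℓ = c_{ij}/2 + (k+1) ∈ L(i,j)`. -/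
noncomputable def Phi (i : I) :
    (Wt i × ((j : I) → Fin (cnat d i j) → Vt j)) →ₗ[ℂ] Vt i :=
  A i ∘ₗ LinearMap.fst ℂ (Wt i) ((j : I) → Fin (cnat d i j) → Vt j) +
  ∑ j : I, ∑ k : Fin (cnat d i j),
    lpow (x i i) (k : ℕ) ∘ₗ x i j ∘ₗ LinearMap.proj k ∘ₗ LinearMap.proj j ∘ₗ
      LinearMap.snd ℂ (Wt i) ((j' : I) → Fin (cnat d i j') → Vt j')

/-- The graded piece `D_i^a = W_i^{a+d_i} ⊕ ⨁_{j≠i} ⨁_{ℓ∈L(i,j)} V_j^{a+ℓd_{ii}}` of the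
domain of `Φ_i`. -/
def Dg (i : I) (a : ℤ) :
    Submodule ℂ (Wt i × ((j : I) → Fin (cnat d i j) → Vt j)) :=
  (Wg i (a + dl d i)).prod
    (Submodule.pi Set.univ fun j => Submodule.pi Set.univ fun k : Fin (cnat d i j) =>
      Vg j (a + d i j + ((k : ℤ) + 1) * d i i))

/-- The map `Ψ_i : V_i → D_i` (all `Ψ_i^a` at once). -/
noncomputable def Psi (i : I) :
    Vt i →ₗ[ℂ] (Wt i × ((j : I) → Fin (cnat d i j) → Vt j)) :=
  LinearMap.prod (B i)
    (LinearMap.pi fun j => LinearMap.pi fun k : Fin (cnat d i j) =>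
      x j i ∘ₗ lpow (x i i) (cnat d i j - 1 - (k : ℕ)))

/-- The map `Υ_i : D_i → D_i` (all `Υ_i^a : D_i^a → D_i^{a - d_{ii}}` at once). -/
noncomputable def Ups (i : I) :
    (Wt i × ((j : I) → Fin (cnat d i j) → Vt j)) →ₗ[ℂ]
      (Wt i × ((j : I) → Fin (cnat d i j) → Vt j)) :=
  LinearMap.prod 0
    (LinearMap.pi fun j => LinearMap.pi fun k : Fin (cnat d i j) =>
      if (k : ℕ) = 0 then
        -(lpow (x j j) (cnat d j i) ∘ₗ
          LinearMap.proj (⟨cnat d i j - 1, Nat.sub_lt k.pos Nat.one_pos⟩ : Fin (cnat d i j)) ∘ₗ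
          LinearMap.proj j ∘ₗ
          LinearMap.snd ℂ (Wt i) ((j' : I) → Fin (cnat d i j') → Vt j'))
      else
        LinearMap.proj (⟨(k : ℕ) - 1, lt_of_le_of_lt (Nat.sub_le _ _) k.isLt⟩ :
            Fin (cnat d i j)) ∘ₗ
          LinearMap.proj j ∘ₗ
          LinearMap.snd ℂ (Wt i) ((j' : I) → Fin (cnat d i j') → Vt j'))

/-- The (ambient representative of the) map `x̄_{j,i} : V̄_i^a → V_j^{a-d_{ij}}`, i.e. the
projection of `D_i^a` onto its summand `V_j^{a-d_{ij}}` (the one with `ℓ = -c_{ij}/2`). -/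
noncomputable def prj (i j : I) :
    (Wt i × ((j' : I) → Fin (cnat d i j') → Vt j')) →ₗ[ℂ] Vt j :=
  if h : 0 < cnat d i j then
    LinearMap.proj (⟨cnat d i j - 1, Nat.sub_lt h Nat.one_pos⟩ : Fin (cnat d i j)) ∘ₗ
      LinearMap.proj j ∘ₗ LinearMap.snd ℂ (Wt i) ((j' : I) → Fin (cnat d i j') → Vt j')
  else 0

/-- The operation `S_i` on dimension vectors (depending on `w`), cf. the braid group action
on monomials. -/
def SS (d : I → I → ℤ) (w : I → ℤ → ℕ) (i : I) (u : I → ℤ → ℤ) : I → ℤ → ℤ := fun j a =>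
  if j = i then
    (w i (a + dl d i) : ℤ) +
      (∑ j' ∈ Finset.univ.erase i, ∑ k ∈ Finset.range (cnat d i j'),
        u j' (a + d i j' + ((k : ℤ) + 1) * d i i)) -
      u i (a + d i i)
  else u j a

/-- The simple reflection `s_i` on stability parameters. -/
def sref (d : I → I → ℤ) (i : I) (θ : I → ℝ) : I → ℝ := fun j => θ j - (cc d j i : ℝ) * θ i

/-- A subrepresentation `Ū` of the reflected collection `V̄`, described in ambient terms:
`Ū_j^a = Uo j a ⊆ V_j^a` for `j ≠ i`, while `Ū_i^a = Ui a ⊆ Ker Φ_i^a = D_i^a ⊓ Ker Φ_i`. -/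
def BarSubrep (i : I) (Uo : ∀ j : I, ℤ → Submodule ℂ (Vt j))
    (Ui : ℤ → Submodule ℂ (Wt i × ((j : I) → Fin (cnat d i j) → Vt j))) : Prop :=
  (∀ a, Ui a ≤ Dg d Vt Wt Vg Wg i a ⊓ LinearMap.ker (Phi d Vt Wt x A i)) ∧
  (∀ j, j ≠ i → ∀ a, Uo j a ≤ Vg j a) ∧
  (∀ j j', j ≠ i → j' ≠ i → ∀ a, (Uo j' a).map (x j j') ≤ Uo j (a - d j' j)) ∧
  (∀ j, j ≠ i → ∀ a, (Ui a).map (prj d Vt Wt i j) ≤ Uo j (a - d i j)) ∧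
  (∀ j, j ≠ i → ∀ a,
    (Uo j (a + d i j)).map (Psi d Vt Wt x B i ∘ₗ x i j) ≤ Ui a) ∧
  (∀ a, (Ui a).map (Ups d Vt Wt x i) ≤ Ui (a - d i i))

/-- The dimension vector of a subrepresentation of the reflected collection. -/
noncomputable def dimbar (i : I) (Uo : ∀ j : I, ℤ → Submodule ℂ (Vt j))
    (Ui : ℤ → Submodule ℂ (Wt i × ((j : I) → Fin (cnat d i j) → Vt j))) : I → ℤ → ℤ :=
  fun j a => if j = i then (Module.finrank ℂ (Ui a) : ℤ)
    else (Module.finrank ℂ (Uo j a) : ℤ)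

/-- The reflected collection `V̄` (with `V̄_i^a = Ker Φ_i^a`, all other data as described) is a
point of `P_{v̄,w}`: the grading of `Ker Φ_i` is an internal direct sum, the reflected maps
respect the gradings, and the relations (R1)-(R4) hold for the reflected maps. -/
def BarPoint (i : I) : Prop :=
  FiniteDimensional ℂ (LinearMap.ker (Phi d Vt Wt x A i)) ∧
  DirectSum.IsInternal (fun a : ℤ =>
    (Dg d Vt Wt Vg Wg i a).comap (LinearMap.ker (Phi d Vt Wt x A i)).subtype) ∧
  (∀ j, j ≠ i → ∀ a,
    ((Dg d Vt Wt Vg Wg i a ⊓ LinearMap.ker (Phi d Vt Wt x A i)).map (prj d Vt Wt i j))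
      ≤ Vg j (a - d i j)) ∧
  (∀ j, j ≠ i → ∀ a,
    (Vg j (a + d i j)).map (Psi d Vt Wt x B i ∘ₗ x i j)
      ≤ Dg d Vt Wt Vg Wg i a ⊓ LinearMap.ker (Phi d Vt Wt x A i)) ∧
  (∀ a, ((Dg d Vt Wt Vg Wg i a ⊓ LinearMap.ker (Phi d Vt Wt x A i)).map (Ups d Vt Wt x i))
      ≤ Dg d Vt Wt Vg Wg i (a - d i i) ⊓ LinearMap.ker (Phi d Vt Wt x A i)) ∧
  (∀ a, ((Wg i a).map (Psi d Vt Wt x B i ∘ₗ A i))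
      ≤ Dg d Vt Wt Vg Wg i (a + dl d i) ⊓ LinearMap.ker (Phi d Vt Wt x A i)) ∧
  (∀ a, ((Dg d Vt Wt Vg Wg i a ⊓ LinearMap.ker (Phi d Vt Wt x A i)).map
      (LinearMap.fst ℂ (Wt i) ((j : I) → Fin (cnat d i j) → Vt j)))
      ≤ Wg i (a + dl d i)) ∧
  -- (R1), case of the pair (j, i) with j ≠ i
  (∀ j, j ≠ i → ∀ u ∈ LinearMap.ker (Phi d Vt Wt x A i),
    lpow (x j j) (cnat d j i) (prj d Vt Wt i j u) +
      prj d Vt Wt i j (lpow (Ups d Vt Wt x i) (cnat d i j) u) = 0) ∧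
  -- (R1), case of the pair (i, j) with j ≠ i
  (∀ j, j ≠ i →
    lpow (Ups d Vt Wt x i) (cnat d i j) ∘ₗ (Psi d Vt Wt x B i ∘ₗ x i j) +
      (Psi d Vt Wt x B i ∘ₗ x i j) ∘ₗ lpow (x j j) (cnat d j i) = 0) ∧
  -- (R1), case of a pair (j, j') not involving i
  (∀ j j', j ≠ i → j' ≠ i → j ≠ j' →
    lpow (x j j) (cnat d j j') ∘ₗ x j j' + x j j' ∘ₗ lpow (x j' j') (cnat d j' j) = 0) ∧
  -- (R2) at the vertex i
  (∀ u ∈ LinearMap.ker (Phi d Vt Wt x A i),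
    (∑ j ∈ Finset.univ.erase i, ∑ ℓ ∈ Finset.range (cnat d i j),
      lpow (Ups d Vt Wt x i) (cnat d i j - 1 - ℓ)
        ((Psi d Vt Wt x B i ∘ₗ x i j)
          (prj d Vt Wt i j (lpow (Ups d Vt Wt x i) ℓ u)))) +
      Psi d Vt Wt x B i
        (A i ((LinearMap.fst ℂ (Wt i) ((j : I) → Fin (cnat d i j) → Vt j)) u)) = 0) ∧
  -- (R2) at a vertex j ≠ i
  (∀ j, j ≠ i →
    (∑ j' ∈ Finset.univ.erase j, ∑ ℓ ∈ Finset.range (cnat d j j'),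
      (if j' = i then
        lpow (x j j) (cnat d j j' - 1 - ℓ) ∘ₗ prj d Vt Wt i j ∘ₗ
          Psi d Vt Wt x B i ∘ₗ x i j ∘ₗ lpow (x j j) ℓ
      else
        lpow (x j j) (cnat d j j' - 1 - ℓ) ∘ₗ x j j' ∘ₗ x j' j ∘ₗ lpow (x j j) ℓ)) +
      A j ∘ₗ B j = 0) ∧
  -- (R3) at the vertex i
  (Ups d Vt Wt x i ∘ₗ (Psi d Vt Wt x B i ∘ₗ A i) = 0) ∧
  -- (R3) at a vertex j ≠ i
  (∀ j, j ≠ i → x j j ∘ₗ A j = 0) ∧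
  -- (R4) at the vertex i
  (∀ u ∈ LinearMap.ker (Phi d Vt Wt x A i),
    (LinearMap.fst ℂ (Wt i) ((j : I) → Fin (cnat d i j) → Vt j)) (Ups d Vt Wt x i u) = 0) ∧
  -- (R4) at a vertex j ≠ i
  (∀ j, j ≠ i → B j ∘ₗ x j j = 0)

/-- `θ'`-stability of the reflected collection, in ambient terms. -/
def BarStable (i : I) (θ' : I → ℝ) : Prop :=
  (∀ (Uo : ∀ j : I, ℤ → Submodule ℂ (Vt j))
      (Ui : ℤ → Submodule ℂ (Wt i × ((j : I) → Fin (cnat d i j) → Vt j))),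
    BarSubrep d Vt Wt Vg Wg x A B i Uo Ui →
    (∀ j, j ≠ i → ∀ a, (Uo j a).map (B j) = ⊥) →
    (∀ a, (Ui a).map (LinearMap.fst ℂ (Wt i) ((j : I) → Fin (cnat d i j) → Vt j)) = ⊥) →
    pairθ d θ' (dimbar d Vt Wt i Uo Ui) ≤ 0) ∧
  (∀ (Uo : ∀ j : I, ℤ → Submodule ℂ (Vt j))
      (Ui : ℤ → Submodule ℂ (Wt i × ((j : I) → Fin (cnat d i j) → Vt j))),
    BarSubrep d Vt Wt Vg Wg x A B i Uo Ui →
    (∀ j, j ≠ i → ∀ a, (Wg j a).map (A j) ≤ Uo j (a + dl d j)) →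
    (∀ a, (Wg i a).map (Psi d Vt Wt x B i ∘ₗ A i) ≤ Ui (a + dl d i)) →
    0 ≤ pairθ d θ'
      (fun j a => SS d w i (fun j' b => (v j' b : ℤ)) j a - dimbar d Vt Wt i Uo Ui j a))

end Rep

end QChar
set_option linter.unusedSectionVars false
namespace QChar

variable {I : Type} [Fintype I] [DecidableEq I]

theorem lpow_zero {M : Type} [AddCommGroup M] [Module ℂ M] (f : M →ₗ[ℂ] M) :
    lpow f 0 = LinearMap.id := rfl

theorem lpow_succ' {M : Type} [AddCommGroup M] [Module ℂ M] (f : M →ₗ[ℂ] M) (n : ℕ) :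
    lpow f (n + 1) = lpow f n ∘ₗ f := by
  induction n with
  | zero => simp [lpow]
  | succ n ih =>
    show f ∘ₗ lpow f (n + 1) = (f ∘ₗ lpow f n) ∘ₗ f
    rw [ih, LinearMap.comp_assoc]

theorem lpow_add {M : Type} [AddCommGroup M] [Module ℂ M] (f : M →ₗ[ℂ] M) (m n : ℕ) :
    lpow f (m + n) = lpow f m ∘ₗ lpow f n := by
  induction m with
  | zero => simp [lpow]
  | succ m ih =>
    have : m + 1 + n = (m + n) + 1 := by omega
    rw [this]
    show f ∘ₗ lpow f (m + n) = (f ∘ₗ lpow f m) ∘ₗ lpow f n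
    rw [ih, LinearMap.comp_assoc]

section arith
variable {d : I → I → ℤ} (hd : CartanData d)
include hd

theorem cc_mul (i j : I) : cc d i j * d i i = 2 * d i j :=
  Int.ediv_mul_cancel (hd.dvd i j)

theorem cc_nonpos {i j : I} (h : j ≠ i) : cc d i j ≤ 0 := by
  have h1 := cc_mul hd i j
  have h2 := hd.pos i
  have h3 : 2 * d i j ≤ 0 := by have := hd.offdiag i j (Ne.symm h); omega
  nlinarith

theorem cnat_cast {i j : I} (h : j ≠ i) : (cnat d i j : ℤ) = -(cc d i j) := by
  rw [cnat, Int.toNat_of_nonneg (by simpa using cc_nonpos hd h)]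

theorem cnat_mul {i j : I} (h : j ≠ i) : (cnat d i j : ℤ) * d i i = -(2 * d i j) := by
  rw [cnat_cast hd h, neg_mul, cc_mul hd i j]

theorem cnat_self (i : I) : cnat d i i = 0 := by
  have h2 := hd.pos i
  have : cc d i i = 2 := by
    rw [cc, Int.mul_ediv_cancel _ (by omega)]
  simp [cnat, this]

theorem dij_eq_zero {i j : I} (h : j ≠ i) (h0 : cnat d i j = 0) : d i j = 0 := by
  have := cnat_mul hd h
  rw [h0] at this
  simpa using this

theorem cnat_pos {i j : I} (h : j ≠ i) (h0 : d i j ≠ 0) : 0 < cnat d i j := by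
  rcases Nat.eq_zero_or_pos (cnat d i j) with h1 | h1
  · exact absurd (dij_eq_zero hd h h1) h0
  · exact h1

theorem dl_add_dl (i : I) : dl d i + dl d i = d i i := by
  obtain ⟨r, hr⟩ := hd.even i
  have : dl d i = r := by rw [dl, hr]; omega
  omega

end arith

end QChar
namespace QChar
section Core
set_option linter.unusedSectionVars false
set_option maxHeartbeats 1000000
variable {I : Type} [Fintype I] [DecidableEq I]
variable {d : I → I → ℤ}
    {Vt : I → Type} [∀ i, AddCommGroup (Vt i)] [∀ i, Module ℂ (Vt i)]
    {Wt : I → Type} [∀ i, AddCommGroup (Wt i)] [∀ i, Module ℂ (Wt i)]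
    {Vg : ∀ i : I, ℤ → Submodule ℂ (Vt i)} {Wg : ∀ i : I, ℤ → Submodule ℂ (Wt i)}
    {x : ∀ j i : I, Vt i →ₗ[ℂ] Vt j} {A : ∀ i : I, Wt i →ₗ[ℂ] Vt i}
    {B : ∀ i : I, Vt i →ₗ[ℂ] Wt i} {i : I}

theorem Phi_apply (u : Wt i × ((j : I) → Fin (cnat d i j) → Vt j)) :
    Phi d Vt Wt x A i u =
      A i u.1 + ∑ j : I, ∑ k : Fin (cnat d i j), lpow (x i i) (k : ℕ) (x i j (u.2 j k)) := by
  simp [Phi, LinearMap.sum_apply]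

theorem Psi_fst (vv : Vt i) : (Psi d Vt Wt x B i vv).1 = B i vv := by simp [Psi]

theorem Psi_snd (vv : Vt i) (j : I) (k : Fin (cnat d i j)) :
    (Psi d Vt Wt x B i vv).2 j k =
      x j i (lpow (x i i) (cnat d i j - 1 - (k : ℕ)) vv) := by
  simp [Psi]

theorem Ups_fst (u : Wt i × ((j : I) → Fin (cnat d i j) → Vt j)) :
    (Ups d Vt Wt x i u).1 = 0 := by
  simp [Ups]

theorem Ups_snd_ne (u : Wt i × ((j : I) → Fin (cnat d i j) → Vt j)) (j : I)
    (k : Fin (cnat d i j)) (hk : (k : ℕ) ≠ 0) :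
    (Ups d Vt Wt x i u).2 j k =
      u.2 j ⟨(k : ℕ) - 1, lt_of_le_of_lt (Nat.sub_le _ _) k.isLt⟩ := by
  simp [Ups, hk]

theorem Ups_snd_zero (u : Wt i × ((j : I) → Fin (cnat d i j) → Vt j)) (j : I)
    (k : Fin (cnat d i j)) (hk : (k : ℕ) = 0) :
    (Ups d Vt Wt x i u).2 j k =
      -(lpow (x j j) (cnat d j i)
          (u.2 j ⟨cnat d i j - 1, Nat.sub_lt k.pos Nat.one_pos⟩)) := by
  simp [Ups, hk]

theorem prj_apply (j : I) (h : 0 < cnat d i j)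
    (u : Wt i × ((j' : I) → Fin (cnat d i j') → Vt j')) :
    prj d Vt Wt i j u = u.2 j ⟨cnat d i j - 1, Nat.sub_lt h Nat.one_pos⟩ := by
  simp [prj, h]

theorem prj_zero (j : I) (h : cnat d i j = 0) :
    prj d Vt Wt i j = 0 := by
  simp [prj, h]

/-- shift formula for powers of `Ups` -/
theorem Ups_pow_snd (m : ℕ) (u : Wt i × ((j : I) → Fin (cnat d i j) → Vt j)) (j : I)
    (k : Fin (cnat d i j)) (h : m ≤ (k : ℕ)) :
    (lpow (Ups d Vt Wt x i) m u).2 j k = u.2 j ⟨(k : ℕ) - m, by omega⟩ := by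
  induction m generalizing k with
  | zero => simp [lpow]
  | succ m ih =>
    show (Ups d Vt Wt x i ((lpow (Ups d Vt Wt x i) m) u)).2 j k = _
    rw [Ups_snd_ne _ _ _ (by omega), ih _ (by show m ≤ (k:ℕ)-1; omega)]
    exact congrArg (u.2 j) (Fin.ext (by simp only [Fin.val_mk]; omega))

/-- wrap-around formula for the top component of `Ups^{c_{ij}}` -/
theorem Ups_pow_top (u : Wt i × ((j : I) → Fin (cnat d i j) → Vt j)) (j : I)
    (h : 0 < cnat d i j) :
    (lpow (Ups d Vt Wt x i) (cnat d i j) u).2 j ⟨cnat d i j - 1, Nat.sub_lt h Nat.one_pos⟩ =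
      -(lpow (x j j) (cnat d j i)
          (u.2 j ⟨cnat d i j - 1, Nat.sub_lt h Nat.one_pos⟩)) := by
  have hc : cnat d i j = (cnat d i j - 1) + 1 := by omega
  have e : lpow (Ups d Vt Wt x i) (cnat d i j) = lpow (Ups d Vt Wt x i) ((cnat d i j - 1) + 1) := by
    rw [← hc]
  rw [e, lpow_succ', LinearMap.comp_apply,
    Ups_pow_snd (cnat d i j - 1) _ j _ (by simp),
    Ups_snd_zero _ j _ (by simp)]

theorem half_zero {M : Type} [AddCommGroup M] [Module ℂ M] {m : M} (h : m + m = 0) :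
    m = 0 := by
  have h2 : (2 : ℂ) • m = 0 := by rw [two_smul]; exact h
  calc m = (2⁻¹ : ℂ) • ((2 : ℂ) • m) := by rw [smul_smul]; norm_num
  _ = 0 := by rw [h2, smul_zero]

theorem sum_shift {β : Type} [AddCommMonoid β] (c : ℕ) (f g : Fin c → β)
    (h0 : ∀ h : 0 < c, f ⟨0, h⟩ = g ⟨c - 1, by omega⟩)
    (hs : ∀ (k : Fin c) (hk : (k : ℕ) ≠ 0), f k = g ⟨(k : ℕ) - 1, by omega⟩) :
    ∑ k, f k = ∑ k, g k := by
  cases c with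
  | zero => simp
  | succ n =>
    rw [Fin.sum_univ_succ, Fin.sum_univ_castSucc (f := g)]
    have e0 : f 0 = g (Fin.last n) := by
      rw [show (0 : Fin (n+1)) = ⟨0, Nat.succ_pos n⟩ from rfl, h0 (Nat.succ_pos n)]
      exact congrArg g (Fin.ext rfl)
    have es : ∀ k : Fin n, f k.succ = g k.castSucc := fun k => by
      rw [hs k.succ (by simp)]
      exact congrArg g (Fin.ext (by simp))
    rw [e0, Finset.sum_congr rfl (fun k _ => es k), add_comm]

section withhd
variable (hd : CartanData d)
variable (hR1 : ∀ i' j', i' ≠ j' →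
    lpow (x j' j') (cnat d j' i') ∘ₗ x j' i' + x j' i' ∘ₗ lpow (x i' i') (cnat d i' j') = 0)
include hd hR1

/-- when `c_{ij} = 0` both arrows between `i` and `j` vanish -/
theorem x_zero {j : I} (hji : j ≠ i) (h0 : cnat d i j = 0) : x j i = 0 := by
  have h := hR1 i j (Ne.symm hji)
  have hji0 : d j i = 0 := by rw [← hd.symm]; exact dij_eq_zero hd hji h0
  have hcji : cnat d j i = 0 := by
    have : cc d j i = 0 := by rw [cc, hji0]; simp
    simp [cnat, this]
  rw [h0, hcji] at h
  simp only [lpow, LinearMap.comp_id, LinearMap.id_comp] at h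
  exact half_zero h

/-- the key commutation `Υ ∘ Ψ = Ψ ∘ x_{ii}` -/
theorem Ups_comp_Psi (hR4 : B i ∘ₗ x i i = 0) :
    Ups d Vt Wt x i ∘ₗ Psi d Vt Wt x B i = Psi d Vt Wt x B i ∘ₗ x i i := by
  apply LinearMap.ext; intro vv
  rw [LinearMap.comp_apply, LinearMap.comp_apply]
  apply Prod.ext
  · rw [Ups_fst, Psi_fst]
    exact (DFunLike.congr_fun hR4 vv).symm
  · funext j k
    by_cases hj : j = i
    · subst hj; exact absurd k.isLt (by simp [cnat_self hd])
    by_cases hk : (k : ℕ) = 0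
    · rw [Ups_snd_zero _ j k hk, Psi_snd, Psi_snd, hk]
      simp only [Fin.val_mk, Nat.sub_self, Nat.sub_zero]
      have e3 : lpow (x i i) (cnat d i j - 1) ((x i i) vv)
          = lpow (x i i) (cnat d i j) vv := by
        rw [← LinearMap.comp_apply, ← lpow_succ',
          show cnat d i j - 1 + 1 = cnat d i j from by have := k.pos; omega]
      rw [e3, lpow_zero, LinearMap.id_apply]
      have h := DFunLike.congr_fun (hR1 i j (Ne.symm hj)) vv
      simp only [LinearMap.add_apply, LinearMap.comp_apply, LinearMap.zero_apply] at h
      rw [neg_eq_iff_add_eq_zero]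
      exact h
    · rw [Ups_snd_ne _ j k hk, Psi_snd, Psi_snd]
      have e3 : lpow (x i i) (cnat d i j - 1 - (k : ℕ)) ((x i i) vv)
          = lpow (x i i) (cnat d i j - 1 - ((k : ℕ) - 1)) vv := by
        rw [← LinearMap.comp_apply, ← lpow_succ',
          show cnat d i j - 1 - (k : ℕ) + 1 = cnat d i j - 1 - ((k : ℕ) - 1) from by
            have h1 := k.isLt
            have h2 : 0 < (k : ℕ) := Nat.pos_of_ne_zero hk
            omega]
      rw [e3]

theorem Ups_pow_comp_Psi (hR4 : B i ∘ₗ x i i = 0) (m : ℕ) :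
    lpow (Ups d Vt Wt x i) m ∘ₗ Psi d Vt Wt x B i
      = Psi d Vt Wt x B i ∘ₗ lpow (x i i) m := by
  induction m with
  | zero => show LinearMap.id ∘ₗ _ = _ ∘ₗ LinearMap.id; simp
  | succ m ih =>
    show (Ups d Vt Wt x i ∘ₗ lpow (Ups d Vt Wt x i) m) ∘ₗ _ = _ ∘ₗ (x i i ∘ₗ lpow (x i i) m)
    rw [LinearMap.comp_assoc, ih, ← LinearMap.comp_assoc, Ups_comp_Psi hd hR1 hR4,
      LinearMap.comp_assoc]

/-- the key commutation `Φ ∘ Υ = x_{ii} ∘ Φ` -/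
theorem Phi_comp_Ups (hR3 : x i i ∘ₗ A i = 0) :
    Phi d Vt Wt x A i ∘ₗ Ups d Vt Wt x i = x i i ∘ₗ Phi d Vt Wt x A i := by
  apply LinearMap.ext; intro u
  rw [LinearMap.comp_apply, LinearMap.comp_apply, Phi_apply, Phi_apply, Ups_fst, map_zero,
    zero_add, map_add]
  have h3 : x i i (A i u.1) = 0 := by
    have := DFunLike.congr_fun hR3 u.1
    simpa using this
  rw [h3, zero_add, map_sum]
  apply Finset.sum_congr rfl
  intro j _
  rw [map_sum]
  by_cases hj : j = i
  · subst hj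
    rw [Finset.sum_eq_zero, Finset.sum_eq_zero] <;>
      (intro k _; exact absurd k.isLt (by simp [cnat_self hd]))
  · apply sum_shift
    · intro h
      rw [Ups_snd_zero _ j _ (by simp)]
      have : lpow (x i i) ((⟨0, h⟩ : Fin (cnat d i j)) : ℕ) = LinearMap.id := rfl
      rw [this, LinearMap.id_apply, map_neg]
      have h1 := DFunLike.congr_fun (hR1 j i hj)
        (u.2 j ⟨cnat d i j - 1, Nat.sub_lt h Nat.one_pos⟩)
      simp only [LinearMap.add_apply, LinearMap.comp_apply, LinearMap.zero_apply] at h1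
      rw [neg_eq_iff_add_eq_zero, add_comm]
      have e : x i i (lpow (x i i) ((⟨cnat d i j - 1, by omega⟩ : Fin (cnat d i j)) : ℕ)
            (x i j (u.2 j ⟨cnat d i j - 1, by omega⟩)))
          = lpow (x i i) (cnat d i j) (x i j (u.2 j ⟨cnat d i j - 1, by omega⟩)) := by
        show lpow (x i i) ((cnat d i j - 1) + 1) _ = _
        rw [show cnat d i j - 1 + 1 = cnat d i j from by omega]
      rw [e]
      exact h1
    · intro k hk
      rw [Ups_snd_ne _ j k hk]
      show lpow (x i i) ((k : ℕ)) (x i j (u.2 j ⟨(k : ℕ) - 1, _⟩))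
        = lpow (x i i) (((k : ℕ) - 1) + 1) (x i j (u.2 j ⟨(k : ℕ) - 1, _⟩))
      rw [show ((k : ℕ) - 1) + 1 = (k : ℕ) from by
        have := Nat.pos_of_ne_zero hk
        omega]

end withhd

section withhd2
variable (hd : CartanData d)
include hd

/-- `Φ ∘ Ψ = 0` -/
theorem Phi_comp_Psi
    (hR2 : (∑ j ∈ Finset.univ.erase i, ∑ ℓ ∈ Finset.range (cnat d i j),
        lpow (x i i) (cnat d i j - 1 - ℓ) ∘ₗ x i j ∘ₗ x j i ∘ₗ lpow (x i i) ℓ)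
        + A i ∘ₗ B i = 0) :
    Phi d Vt Wt x A i ∘ₗ Psi d Vt Wt x B i = 0 := by
  apply LinearMap.ext; intro vv
  rw [LinearMap.comp_apply, Phi_apply, Psi_fst, LinearMap.zero_apply]
  have h2 := DFunLike.congr_fun hR2 vv
  simp only [LinearMap.add_apply, LinearMap.sum_apply, LinearMap.comp_apply,
    LinearMap.zero_apply] at h2
  rw [add_comm]
  rw [← Finset.sum_erase_add Finset.univ _ (Finset.mem_univ i)]
  have hzero : ∑ k : Fin (cnat d i i), lpow (x i i) (k : ℕ)
      (x i i ((Psi d Vt Wt x B i vv).2 i k)) = 0 := by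
    apply Finset.sum_eq_zero
    intro k _
    exact absurd k.isLt (by simp [cnat_self hd])
  rw [hzero, add_zero]
  rw [← h2]
  congr 1
  apply Finset.sum_congr rfl
  intro j hj
  have hji : j ≠ i := (Finset.mem_erase.mp hj).1
  have : ∀ k : Fin (cnat d i j), lpow (x i i) (k : ℕ) (x i j ((Psi d Vt Wt x B i vv).2 j k))
      = lpow (x i i) (k : ℕ) (x i j (x j i (lpow (x i i) (cnat d i j - 1 - (k : ℕ)) vv))) := by
    intro k
    rw [Psi_snd]
  rw [Finset.sum_congr rfl (fun k _ => this k), Fin.sum_univ_eq_sum_range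
    (fun k => lpow (x i i) k (x i j (x j i (lpow (x i i) (cnat d i j - 1 - k) vv))))]
  rw [← Finset.sum_range_reflect]
  apply Finset.sum_congr rfl
  intro ℓ hℓ
  have hℓc := Finset.mem_range.mp hℓ
  rw [show cnat d i j - 1 - (cnat d i j - 1 - ℓ) = ℓ from by omega]

variable (hR1 : ∀ i' j', i' ≠ j' →
    lpow (x j' j') (cnat d j' i') ∘ₗ x j' i' + x j' i' ∘ₗ lpow (x i' i') (cnat d i' j') = 0)
include hR1

/-- `x̄_{j,i} ∘ Ψ = x_{j,i}` -/
theorem prj_Psi {j : I} (hji : j ≠ i) (vv : Vt i) :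
    prj d Vt Wt i j (Psi d Vt Wt x B i vv) = x j i vv := by
  by_cases h : 0 < cnat d i j
  · rw [prj_apply j h, Psi_snd]
    simp only [Fin.val_mk, Nat.sub_self, lpow_zero, LinearMap.id_apply]
  · rw [prj_zero j (by omega), x_zero hd hR1 hji (by omega)]
    rfl

end withhd2

/-- wrap formula through `prj` : `x̄_{j,i}(Υ^{c_{ij}} u) = -x_{jj}^{(c_{ji})}(x̄_{j,i} u)` -/
theorem prj_Ups_pow {j : I} (u : Wt i × ((j' : I) → Fin (cnat d i j') → Vt j')) :
    prj d Vt Wt i j (lpow (Ups d Vt Wt x i) (cnat d i j) u) =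
      -(lpow (x j j) (cnat d j i) (prj d Vt Wt i j u)) := by
  by_cases h : 0 < cnat d i j
  · rw [prj_apply j h, prj_apply j h, Ups_pow_top _ j h]
  · rw [prj_zero j (by omega)]
    simp

theorem mem_Dg {a : ℤ} {u : Wt i × ((j : I) → Fin (cnat d i j) → Vt j)} :
    u ∈ Dg d Vt Wt Vg Wg i a ↔ u.1 ∈ Wg i (a + dl d i) ∧
      ∀ (j : I) (k : Fin (cnat d i j)),
        u.2 j k ∈ Vg j (a + d i j + ((k : ℤ) + 1) * d i i) := by
  simp [Dg, Submodule.mem_prod, Submodule.mem_pi]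

theorem x_mem (hx : ∀ j' i' a, (Vg i' a).map (x j' i') ≤ Vg j' (a - d i' j'))
    {i' j' : I} {a : ℤ} {vv : Vt i'} (h : vv ∈ Vg i' a) :
    x j' i' vv ∈ Vg j' (a - d i' j') :=
  hx j' i' a (Submodule.mem_map_of_mem h)

theorem lpow_mem (hx : ∀ j' i' a, (Vg i' a).map (x j' i') ≤ Vg j' (a - d i' j'))
    {i' : I} (m : ℕ) {a : ℤ} {vv : Vt i'} (h : vv ∈ Vg i' a) :
    lpow (x i' i') m vv ∈ Vg i' (a - (m : ℤ) * d i' i') := by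
  induction m generalizing a vv with
  | zero =>
    simpa [lpow_zero] using h
  | succ m ih =>
    show x i' i' (lpow (x i' i') m vv) ∈ _
    have h1 := x_mem (j' := i') hx (ih h)
    have e : a - (m : ℤ) * d i' i' - d i' i' = a - ((m : ℕ) + 1 : ℤ) * d i' i' := by ring
    rw [e] at h1
    convert h1 using 3
    rw [Nat.cast_succ]

section graded
variable (hd : CartanData d)
    (hx : ∀ j' i' a, (Vg i' a).map (x j' i') ≤ Vg j' (a - d i' j'))
include hd hx

/-- `Ψ` maps `V_i^a` into `D_i^a` -/
theorem Psi_mem (hB : ∀ i' a, (Vg i' a).map (B i') ≤ Wg i' (a + dl d i'))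
    {a : ℤ} {vv : Vt i} (h : vv ∈ Vg i a) :
    Psi d Vt Wt x B i vv ∈ Dg d Vt Wt Vg Wg i a := by
  rw [mem_Dg]
  constructor
  · rw [Psi_fst]
    exact hB i a (Submodule.mem_map_of_mem h)
  · intro j k
    rw [Psi_snd]
    by_cases hj : j = i
    · subst hj; exact absurd k.isLt (by simp [cnat_self hd])
    have hm := cnat_mul hd (show j ≠ i from hj)
    have hk := k.isLt
    have h1 := x_mem hx (i' := i) (j' := j) (lpow_mem hx (cnat d i j - 1 - (k : ℕ)) h)
    have e : a - ((cnat d i j - 1 - (k : ℕ) : ℕ) : ℤ) * d i i - d i j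
        = a + d i j + ((k : ℤ) + 1) * d i i := by
      have hcast : ((cnat d i j - 1 - (k : ℕ) : ℕ) : ℤ)
          = (cnat d i j : ℤ) - 1 - (k : ℕ) := by omega
      rw [hcast]
      linear_combination -hm
    rw [e] at h1
    exact h1

/-- `Υ` maps `D_i^a` into `D_i^{a - d_{ii}}` -/
theorem Ups_mem {a : ℤ} {u : Wt i × ((j : I) → Fin (cnat d i j) → Vt j)}
    (h : u ∈ Dg d Vt Wt Vg Wg i a) :
    Ups d Vt Wt x i u ∈ Dg d Vt Wt Vg Wg i (a - d i i) := by
  rw [mem_Dg] at h ⊢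
  constructor
  · rw [Ups_fst]; exact zero_mem _
  · intro j k
    by_cases hj : j = i
    · subst hj; exact absurd k.isLt (by simp [cnat_self hd])
    have hm := cnat_mul hd (show j ≠ i from hj)
    have hmji : (cnat d j i : ℤ) * d j j = -(2 * d j i) := cnat_mul hd (Ne.symm hj)
    have hk := k.isLt
    by_cases hk0 : (k : ℕ) = 0
    · rw [Ups_snd_zero _ j k hk0]
      apply neg_mem
      have h1 := lpow_mem hx (i' := j) (cnat d j i)
        (h.2 j ⟨cnat d i j - 1, Nat.sub_lt k.pos Nat.one_pos⟩)
      have e : a + d i j + (((⟨cnat d i j - 1, Nat.sub_lt k.pos Nat.one_pos⟩ :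
            Fin (cnat d i j)) : ℤ) + 1) * d i i - (cnat d j i : ℤ) * d j j
          = a - d i i + d i j + ((k : ℤ) + 1) * d i i := by
        simp only [Fin.val_mk, hk0]
        have hcast : ((cnat d i j - 1 : ℕ) : ℤ) = (cnat d i j : ℤ) - 1 := by
          have := k.pos; omega
        rw [hcast, hmji, hd.symm j i]
        push_cast
        linear_combination hm
      rw [e] at h1
      exact h1
    · rw [Ups_snd_ne _ j k hk0]
      have h1 := h.2 j ⟨(k : ℕ) - 1, lt_of_le_of_lt (Nat.sub_le _ _) k.isLt⟩
      have e : a + d i j + (((⟨(k : ℕ) - 1, lt_of_le_of_lt (Nat.sub_le _ _) k.isLt⟩ :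
            Fin (cnat d i j)) : ℤ) + 1) * d i i
          = a - d i i + d i j + ((k : ℤ) + 1) * d i i := by
        simp only [Fin.val_mk]
        have hcast : (((k : ℕ) - 1 : ℕ) : ℤ) = (k : ℤ) - 1 := by
          have := Nat.pos_of_ne_zero hk0; omega
        rw [hcast]
        ring
      rw [e] at h1
      exact h1

/-- `Φ` maps `D_i^a` into `V_i^{a + d_{ii}}` -/
theorem Phi_mem (hA : ∀ i' a, (Wg i' a).map (A i') ≤ Vg i' (a + dl d i'))
    {a : ℤ} {u : Wt i × ((j : I) → Fin (cnat d i j) → Vt j)}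
    (h : u ∈ Dg d Vt Wt Vg Wg i a) :
    Phi d Vt Wt x A i u ∈ Vg i (a + d i i) := by
  rw [mem_Dg] at h
  rw [Phi_apply]
  apply add_mem
  · have h1 := hA i (a + dl d i) (Submodule.mem_map_of_mem h.1)
    have e : a + dl d i + dl d i = a + d i i := by
      have := dl_add_dl hd i; omega
    rw [e] at h1
    exact h1
  · apply sum_mem
    intro j _
    apply sum_mem
    intro k _
    by_cases hj : j = i
    · subst hj; exact absurd k.isLt (by simp [cnat_self hd])
    have h1 := lpow_mem hx (i' := i) (k : ℕ) (x_mem hx (h.2 j k))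
    have e : a + d i j + ((k : ℤ) + 1) * d i i - d j i - (k : ℤ) * d i i
        = a + d i i := by
      rw [hd.symm j i]; ring
    rw [e] at h1
    exact h1

end graded

theorem sum_eq_zero_of_indep {M : Type} [AddCommGroup M] [Module ℂ M]
    {p : ℤ → Submodule ℂ M} (hp : iSupIndep p) (s : Finset ℤ) (vf : ℤ → M)
    (hv : ∀ b, vf b ∈ p b) (hsum : ∑ b ∈ s, vf b = 0) {b : ℤ} (hb : b ∈ s) :
    vf b = 0 := by
  have h2 : vf b + ∑ b' ∈ s.erase b, vf b' = 0 := by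
    rw [Finset.add_sum_erase s vf hb, hsum]
  have h3 : vf b ∈ ⨆ b', ⨆ _ : b' ≠ b, p b' := by
    rw [eq_neg_of_add_eq_zero_left h2]
    apply neg_mem
    apply sum_mem
    intro b' hb'
    exact le_iSup₂ (f := fun b' (_ : b' ≠ b) => p b') b' (Finset.mem_erase.mp hb').1 (hv b')
  exact Submodule.disjoint_def.mp (hp b) _ (hv b) h3

section internal
variable (hd : CartanData d)
include hd

theorem iSup_Dg_eq_top
    (hVint : ∀ i', DirectSum.IsInternal (Vg i'))
    (hWint : DirectSum.IsInternal (Wg i)) :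
    (⨆ a, Dg d Vt Wt Vg Wg i a) = ⊤ := by
  rw [eq_top_iff]
  rintro ⟨uw, uf⟩ -
  have hW : ∀ ww : Wt i,
      ((ww, 0) : Wt i × ((j : I) → Fin (cnat d i j) → Vt j)) ∈ ⨆ a, Dg d Vt Wt Vg Wg i a := by
    intro ww
    have h1 : ww ∈ ⨆ b, Wg i b := by rw [hWint.submodule_iSup_eq_top]; trivial
    have h3 : (LinearMap.inl ℂ (Wt i) ((j : I) → Fin (cnat d i j) → Vt j)) ww ∈
        Submodule.map (LinearMap.inl ℂ (Wt i) ((j : I) → Fin (cnat d i j) → Vt j))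
          (⨆ b, Wg i b) := Submodule.mem_map_of_mem h1
    rw [Submodule.map_iSup] at h3
    have hle : (⨆ b, Submodule.map (LinearMap.inl ℂ (Wt i) ((j : I) → Fin (cnat d i j) → Vt j))
        (Wg i b)) ≤ ⨆ a, Dg d Vt Wt Vg Wg i a := by
      apply iSup_le
      intro b
      apply le_iSup_of_le (b - dl d i)
      rintro _ ⟨z, hz, rfl⟩
      rw [mem_Dg]
      constructor
      · show z ∈ Wg i (b - dl d i + dl d i)
        rw [show b - dl d i + dl d i = b from by omega]
        exact hz
      · intro j k
        exact zero_mem _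
    exact hle h3
  have hV : ∀ (j : I) (k : Fin (cnat d i j)) (vv : Vt j),
      ((0, Pi.single j (Pi.single k vv)) : Wt i × ((j' : I) → Fin (cnat d i j') → Vt j'))
        ∈ ⨆ a, Dg d Vt Wt Vg Wg i a := by
    intro j k vv
    set sin : Vt j →ₗ[ℂ] Wt i × ((j' : I) → Fin (cnat d i j') → Vt j') :=
      LinearMap.inr ℂ (Wt i) ((j' : I) → Fin (cnat d i j') → Vt j') ∘ₗ
        LinearMap.single ℂ (fun j' => Fin (cnat d i j') → Vt j') j ∘ₗ
        LinearMap.single ℂ (fun _ : Fin (cnat d i j) => Vt j) k with hsin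
    have h1 : vv ∈ ⨆ b, Vg j b := by rw [(hVint j).submodule_iSup_eq_top]; trivial
    have h3 : sin vv ∈ Submodule.map sin (⨆ b, Vg j b) := Submodule.mem_map_of_mem h1
    rw [Submodule.map_iSup] at h3
    have hle : (⨆ b, Submodule.map sin (Vg j b)) ≤ ⨆ a, Dg d Vt Wt Vg Wg i a := by
      apply iSup_le
      intro b
      apply le_iSup_of_le (b - d i j - ((k : ℤ) + 1) * d i i)
      rintro _ ⟨z, hz, rfl⟩
      rw [mem_Dg]
      constructor
      · exact zero_mem _
      · intro j' k'
        simp only [hsin, LinearMap.comp_apply, LinearMap.inr_apply, LinearMap.coe_single]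
        by_cases hj' : j' = j
        · subst hj'
          simp only [Pi.single_eq_same]
          by_cases hk' : k' = k
          · subst hk'
            simp only [Pi.single_eq_same]
            rw [show ∀ c e : ℤ, b - c - e + c + e = b from fun c e => by ring]
            exact hz
          · rw [Pi.single_eq_of_ne hk']
            exact zero_mem _
        · rw [Pi.single_eq_of_ne hj']
          exact zero_mem _
    exact hle h3
  have hdec : (⟨uw, uf⟩ : Wt i × ((j : I) → Fin (cnat d i j) → Vt j)) =
      (uw, 0) + ∑ j : I, ∑ k : Fin (cnat d i j),
        ((0, Pi.single j (Pi.single k (uf j k))) :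
          Wt i × ((j' : I) → Fin (cnat d i j') → Vt j')) := by
    apply Prod.ext
    · simp [Prod.fst_sum]
    · simp only [Prod.snd_add, Prod.snd_sum, zero_add]
      funext j'
      rw [eq_comm]
      simp only [Finset.sum_apply]
      rw [Finset.sum_eq_single j']
      · simp only [Pi.single_eq_same]
        exact Finset.univ_sum_single (uf j')
      · intro j'' _ hne
        apply Finset.sum_eq_zero
        intro k _
        exact Pi.single_eq_of_ne (Ne.symm hne) _
      · intro h
        exact absurd (Finset.mem_univ j') h
  rw [hdec]
  exact add_mem (hW uw) (sum_mem fun j _ => sum_mem fun k _ => hV j k (uf j k))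

theorem indep_Dg
    (hVind : ∀ i', iSupIndep (Vg i'))
    (hWind : iSupIndep (Wg i)) :
    iSupIndep (fun a => Dg d Vt Wt Vg Wg i a) := by
  rw [iSupIndep_def]
  intro a
  rw [Submodule.disjoint_def]
  intro u hu hsup
  have hfst : u.1 = 0 := by
    have h1 : u.1 ∈ Wg i (a + dl d i) := (mem_Dg.mp hu).1
    have h3 : u.1 ∈ Submodule.map (LinearMap.fst ℂ (Wt i) ((j : I) → Fin (cnat d i j) → Vt j))
        (⨆ b, ⨆ _ : b ≠ a, Dg d Vt Wt Vg Wg i b) := Submodule.mem_map_of_mem hsup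
    rw [Submodule.map_iSup] at h3
    have hle : (⨆ b, Submodule.map (LinearMap.fst ℂ (Wt i) ((j : I) → Fin (cnat d i j) → Vt j))
        (⨆ _ : b ≠ a, Dg d Vt Wt Vg Wg i b)) ≤ ⨆ b, ⨆ _ : b ≠ a + dl d i, Wg i b := by
      apply iSup_le
      intro b
      rw [Submodule.map_iSup]
      apply iSup_le
      intro hba
      refine le_trans ?_ (le_iSup₂ (f := fun b' (_ : b' ≠ a + dl d i) => Wg i b')
        (b + dl d i) (by omega))
      rintro _ ⟨z, hz, rfl⟩
      exact (mem_Dg.mp hz).1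
    exact Submodule.disjoint_def.mp (hWind (a + dl d i)) _ h1 (hle h3)
  have hsnd : ∀ (j : I) (k : Fin (cnat d i j)), u.2 j k = 0 := by
    intro j k
    set s : ℤ := d i j + ((k : ℤ) + 1) * d i i with hs
    set ev : (Wt i × ((j' : I) → Fin (cnat d i j') → Vt j')) →ₗ[ℂ] Vt j :=
      LinearMap.proj k ∘ₗ LinearMap.proj j ∘ₗ
        LinearMap.snd ℂ (Wt i) ((j' : I) → Fin (cnat d i j') → Vt j') with hev
    have h1 : u.2 j k ∈ Vg j (a + s) := by
      rw [hs, ← add_assoc]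
      exact (mem_Dg.mp hu).2 j k
    have h3 : ev u ∈ Submodule.map ev (⨆ b, ⨆ _ : b ≠ a, Dg d Vt Wt Vg Wg i b) :=
      Submodule.mem_map_of_mem hsup
    rw [Submodule.map_iSup] at h3
    have hle : (⨆ b, Submodule.map ev (⨆ _ : b ≠ a, Dg d Vt Wt Vg Wg i b))
        ≤ ⨆ b, ⨆ _ : b ≠ a + s, Vg j b := by
      apply iSup_le
      intro b
      rw [Submodule.map_iSup]
      apply iSup_le
      intro hba
      refine le_trans ?_ (le_iSup₂ (f := fun b' (_ : b' ≠ a + s) => Vg j b')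
        (b + s) (by intro hh; exact hba (by omega)))
      rintro _ ⟨z, hz, rfl⟩
      show z.2 j k ∈ Vg j (b + s)
      rw [hs, ← add_assoc]
      exact (mem_Dg.mp hz).2 j k
    exact Submodule.disjoint_def.mp (hVind j (a + s)) _ h1 (hle h3)
  apply Prod.ext hfst
  funext j k
  exact hsnd j k

end internal

theorem ker_internal (hd : CartanData d)
    (hx : ∀ j' i' a, (Vg i' a).map (x j' i') ≤ Vg j' (a - d i' j'))
    (hA : ∀ i' a, (Wg i' a).map (A i') ≤ Vg i' (a + dl d i'))
    (hVint : ∀ i', DirectSum.IsInternal (Vg i'))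
    (hWint : DirectSum.IsInternal (Wg i)) :
    DirectSum.IsInternal (fun a : ℤ =>
      (Dg d Vt Wt Vg Wg i a).comap (LinearMap.ker (Phi d Vt Wt x A i)).subtype) := by
  classical
  rw [DirectSum.isInternal_submodule_iff_iSupIndep_and_iSup_eq_top]
  constructor
  · rw [iSupIndep_def]
    intro a
    rw [Submodule.disjoint_def]
    intro u hu hsup
    have h1 : (u : Wt i × ((j : I) → Fin (cnat d i j) → Vt j)) ∈ Dg d Vt Wt Vg Wg i a := hu
    have h2 : (u : Wt i × ((j : I) → Fin (cnat d i j) → Vt j)) ∈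
        ⨆ b, ⨆ _ : b ≠ a, Dg d Vt Wt Vg Wg i b := by
      have h3 := Submodule.mem_map_of_mem
        (f := (LinearMap.ker (Phi d Vt Wt x A i)).subtype) hsup
      rw [Submodule.map_iSup] at h3
      have hle : (⨆ b, Submodule.map (LinearMap.ker (Phi d Vt Wt x A i)).subtype
          (⨆ _ : b ≠ a, (Dg d Vt Wt Vg Wg i b).comap
            (LinearMap.ker (Phi d Vt Wt x A i)).subtype))
          ≤ ⨆ b, ⨆ _ : b ≠ a, Dg d Vt Wt Vg Wg i b := by
        apply iSup_le
        intro b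
        rw [Submodule.map_iSup]
        apply iSup_le
        intro hba
        exact le_trans (Submodule.map_comap_le _ _)
          (le_iSup₂ (f := fun b' (_ : b' ≠ a) => Dg d Vt Wt Vg Wg i b') b hba)
      exact hle h3
    have h0 := Submodule.disjoint_def.mp
      (indep_Dg hd (fun i' => (hVint i').submodule_iSupIndep)
        hWint.submodule_iSupIndep a) _ h1 h2
    exact Submodule.coe_eq_zero.mp h0
  · rw [eq_top_iff]
    intro u _
    have hsup : (u : Wt i × ((j : I) → Fin (cnat d i j) → Vt j)) ∈
        ⨆ a, Dg d Vt Wt Vg Wg i a := by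
      rw [iSup_Dg_eq_top hd hVint hWint]
      trivial
    obtain ⟨f, hf⟩ := (Submodule.mem_iSup_iff_exists_dfinsupp'
      (fun a => Dg d Vt Wt Vg Wg i a) _).mp hsup
    have hker : ∀ a, Phi d Vt Wt x A i (f a : Wt i × ((j : I) → Fin (cnat d i j) → Vt j)) = 0 := by
      intro a
      by_cases ha : a ∈ f.support
      · have hzero : ∑ b ∈ f.support, Phi d Vt Wt x A i
            (f b : Wt i × ((j : I) → Fin (cnat d i j) → Vt j)) = 0 := by
          rw [← map_sum]
          have hsum : (∑ b ∈ f.support,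
              (f b : Wt i × ((j : I) → Fin (cnat d i j) → Vt j))) = (u : _) := by
            rw [← hf]
            rfl
          rw [hsum]
          exact u.2
        have hind : iSupIndep (fun b : ℤ => Vg i (b + d i i)) :=
          ((hVint i).submodule_iSupIndep).comp (fun b b' hh => by omega)
        exact sum_eq_zero_of_indep hind f.support
          (fun b => Phi d Vt Wt x A i (f b : Wt i × ((j : I) → Fin (cnat d i j) → Vt j)))
          (fun b => Phi_mem hd hx hA (f b).2) hzero ha
      · rw [DFinsupp.notMem_support_iff.mp ha]
        simp
    have hrepr : u = ∑ a ∈ f.support,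
        (⟨(f a : Wt i × ((j : I) → Fin (cnat d i j) → Vt j)),
          LinearMap.mem_ker.mpr (hker a)⟩ : LinearMap.ker (Phi d Vt Wt x A i)) := by
      apply Subtype.ext
      rw [AddSubmonoidClass.coe_finset_sum]
      rw [← hf]
      rfl
    rw [hrepr]
    apply sum_mem
    intro a _
    exact le_iSup (fun a => (Dg d Vt Wt Vg Wg i a).comap
      (LinearMap.ker (Phi d Vt Wt x A i)).subtype) a (f a).2

end Core
end QChar
open QChar in
/-- the reflected collection `V̄` (with `V̄_i^a = Ker Φ_i^a` and the maps
`x̄, Ā, B̄` described in the paper) is a point of `P_{v̄,w}`, i.e. the grading of `Ker Φ_i`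
is internal, the reflected maps respect the gradings, and (R1)-(R4) hold for them. -/
theorem extremal_qchar_stmt4 {I : Type} [Fintype I] [DecidableEq I]
    (d : I → I → ℤ) (v w : I → ℤ → ℕ)
    (Vt : I → Type) [∀ i, AddCommGroup (Vt i)] [∀ i, Module ℂ (Vt i)]
    (Wt : I → Type) [∀ i, AddCommGroup (Wt i)] [∀ i, Module ℂ (Wt i)]
    (Vg : ∀ i : I, ℤ → Submodule ℂ (Vt i)) (Wg : ∀ i : I, ℤ → Submodule ℂ (Wt i))
    (x : ∀ j i : I, Vt i →ₗ[ℂ] Vt j) (A : ∀ i : I, Wt i →ₗ[ℂ] Vt i)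
    (B : ∀ i : I, Vt i →ₗ[ℂ] Wt i)
    (hd : QChar.CartanData d)
    (hv : (Function.support fun p : I × ℤ => v p.1 p.2).Finite)
    (hw : (Function.support fun p : I × ℤ => w p.1 p.2).Finite)
    (hrep : QChar.IsRep d v w Vt Wt Vg Wg x A B)
    (i : I) :
    QChar.BarPoint d Vt Wt Vg Wg x A B i := by
  obtain ⟨hfinV, hfinW, hVint, hWint, hdimV, hdimW, hxg, hAg, hBg, hR1, hR2, hR3, hR4⟩ := hrep
  haveI : ∀ i', FiniteDimensional ℂ (Vt i') := hfinV
  haveI : ∀ i', FiniteDimensional ℂ (Wt i') := hfinW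
  unfold QChar.BarPoint
  refine ⟨?_, ?_, ?_, ?_, ?_, ?_, ?_, ?_, ?_, ?_, ?_, ?_, ?_, ?_, ?_, ?_⟩
  · -- finite dimensionality
    infer_instance
  · -- internality of the grading of ker Φ
    exact ker_internal hd hxg hAg hVint (hWint i)
  · -- grading of prj
    intro j hji a
    rintro _ ⟨z, ⟨hzD, _⟩, rfl⟩
    by_cases h : 0 < cnat d i j
    · rw [prj_apply j h]
      have h1 := (mem_Dg.mp hzD).2 j ⟨cnat d i j - 1, Nat.sub_lt h Nat.one_pos⟩
      have hm := cnat_mul hd hji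
      have e : a + d i j + (((⟨cnat d i j - 1, Nat.sub_lt h Nat.one_pos⟩ :
          Fin (cnat d i j)) : ℤ) + 1) * d i i = a - d i j := by
        simp only [Fin.val_mk]
        have hcast : ((cnat d i j - 1 : ℕ) : ℤ) = (cnat d i j : ℤ) - 1 := by omega
        rw [hcast]
        linear_combination hm
      rw [e] at h1
      exact h1
    · rw [prj_zero j (by omega)]
      exact zero_mem _
  · -- grading of Psi ∘ x i j
    intro j hji a
    rintro _ ⟨z, hz, rfl⟩
    have h1 : x i j z ∈ Vg i a := by
      have h2 := x_mem hxg (i' := j) (j' := i) hz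
      rwa [show a + d i j - d j i = a from by rw [hd.symm i j]; ring] at h2
    constructor
    · exact Psi_mem hd hxg hBg h1
    · exact LinearMap.mem_ker.mpr (DFunLike.congr_fun (Phi_comp_Psi hd (hR2 i)) (x i j z))
  · -- grading of Ups
    intro a
    rintro _ ⟨z, ⟨h1, h2⟩, rfl⟩
    constructor
    · exact Ups_mem hd hxg h1
    · have h3 := DFunLike.congr_fun (Phi_comp_Ups hd hR1 (hR3 i)) z
      simp only [LinearMap.comp_apply] at h3
      have h4 : Phi d Vt Wt x A i z = 0 := h2
      exact LinearMap.mem_ker.mpr (by rw [h3, h4, map_zero])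
  · -- grading of Psi ∘ A i
    intro a
    rintro _ ⟨z, hz, rfl⟩
    have h1 : A i z ∈ Vg i (a + dl d i) := hAg i a (Submodule.mem_map_of_mem hz)
    constructor
    · exact Psi_mem hd hxg hBg h1
    · exact LinearMap.mem_ker.mpr (DFunLike.congr_fun (Phi_comp_Psi hd (hR2 i)) (A i z))
  · -- grading of fst
    intro a
    rintro _ ⟨z, ⟨h1, _⟩, rfl⟩
    exact (mem_Dg.mp h1).1
  · -- (R1) case (j, i)
    intro j hji u hu
    rw [prj_Ups_pow u]
    exact add_neg_cancel _
  · -- (R1) case (i, j)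
    intro j hji
    have h1 : lpow (Ups d Vt Wt x i) (cnat d i j) ∘ₗ (Psi d Vt Wt x B i ∘ₗ x i j)
        = Psi d Vt Wt x B i ∘ₗ (lpow (x i i) (cnat d i j) ∘ₗ x i j) := by
      rw [← LinearMap.comp_assoc, Ups_pow_comp_Psi hd hR1 (hR4 i), LinearMap.comp_assoc]
    have h2 : (Psi d Vt Wt x B i ∘ₗ x i j) ∘ₗ lpow (x j j) (cnat d j i)
        = Psi d Vt Wt x B i ∘ₗ (x i j ∘ₗ lpow (x j j) (cnat d j i)) :=
      LinearMap.comp_assoc _ _ _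
    rw [h1, h2, ← LinearMap.comp_add, hR1 j i hji, LinearMap.comp_zero]
  · -- (R1) case not involving i
    intro j j' _ _ hne
    exact hR1 j' j (Ne.symm hne)
  · -- (R2) at the vertex i
    intro u hu
    have hPhi : Phi d Vt Wt x A i u = 0 := hu
    have main : ∀ (j : I), j ≠ i → ∀ ℓ : ℕ, ℓ < cnat d i j →
        lpow (Ups d Vt Wt x i) (cnat d i j - 1 - ℓ)
          ((Psi d Vt Wt x B i ∘ₗ x i j) (prj d Vt Wt i j (lpow (Ups d Vt Wt x i) ℓ u)))
        = Psi d Vt Wt x B i (lpow (x i i) (cnat d i j - 1 - ℓ)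
            (x i j ((fun m => if h : m < cnat d i j then u.2 j ⟨m, h⟩ else 0)
              (cnat d i j - 1 - ℓ)))) := by
      intro j hji ℓ hℓ
      rw [prj_apply j (by omega),
        Ups_pow_snd ℓ u j ⟨cnat d i j - 1, by omega⟩ (by simp only [Fin.val_mk]; omega)]
      simp only [dif_pos (show cnat d i j - 1 - ℓ < cnat d i j from by omega)]
      have h5 := DFunLike.congr_fun (Ups_pow_comp_Psi hd hR1 (hR4 i) (cnat d i j - 1 - ℓ))
        (x i j (u.2 j ⟨cnat d i j - 1 - ℓ, by omega⟩))
      simp only [LinearMap.comp_apply] at h5 ⊢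
      exact h5
    rw [Finset.sum_congr rfl (fun j hj => Finset.sum_congr rfl (fun ℓ hℓ =>
      main j (Finset.mem_erase.mp hj).1 ℓ (Finset.mem_range.mp hℓ)))]
    rw [show (∑ j ∈ Finset.univ.erase i, ∑ ℓ ∈ Finset.range (cnat d i j),
          Psi d Vt Wt x B i (lpow (x i i) (cnat d i j - 1 - ℓ)
            (x i j ((fun m => if h : m < cnat d i j then u.2 j ⟨m, h⟩ else 0)
              (cnat d i j - 1 - ℓ)))))
        = Psi d Vt Wt x B i (∑ j ∈ Finset.univ.erase i, ∑ ℓ ∈ Finset.range (cnat d i j),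
            (lpow (x i i) (cnat d i j - 1 - ℓ)
              (x i j ((fun m => if h : m < cnat d i j then u.2 j ⟨m, h⟩ else 0)
                (cnat d i j - 1 - ℓ)))) ) from by
      rw [map_sum]
      exact Finset.sum_congr rfl fun j _ => (map_sum _ _ _).symm]
    rw [← map_add]
    have hsum : (∑ j ∈ Finset.univ.erase i, ∑ ℓ ∈ Finset.range (cnat d i j),
        (lpow (x i i) (cnat d i j - 1 - ℓ)
          (x i j ((fun m => if h : m < cnat d i j then u.2 j ⟨m, h⟩ else 0)
            (cnat d i j - 1 - ℓ)))))
        + A i ((LinearMap.fst ℂ (Wt i) ((j : I) → Fin (cnat d i j) → Vt j)) u)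
        = Phi d Vt Wt x A i u := by
      rw [Phi_apply, add_comm]
      congr 1
      rw [← Finset.sum_erase_add Finset.univ _ (Finset.mem_univ i)]
      have hzero : ∑ k : Fin (cnat d i i), lpow (x i i) (k : ℕ) (x i i (u.2 i k)) = 0 := by
        apply Finset.sum_eq_zero
        intro k _
        exact absurd k.isLt (by simp [cnat_self hd])
      rw [hzero, add_zero]
      apply Finset.sum_congr rfl
      intro j hj
      rw [Finset.sum_range_reflect (fun m => lpow (x i i) m
        (x i j ((fun m' => if h : m' < cnat d i j then u.2 j ⟨m', h⟩ else 0) m)))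
        (cnat d i j)]
      rw [show (∑ k : Fin (cnat d i j), lpow (x i i) (k : ℕ) (x i j (u.2 j k)))
          = ∑ m ∈ Finset.range (cnat d i j), (fun m => lpow (x i i) m
            (x i j ((fun m' => if h : m' < cnat d i j then u.2 j ⟨m', h⟩ else 0) m))) m from by
        rw [← Fin.sum_univ_eq_sum_range]
        exact Finset.sum_congr rfl fun k _ => by simp only [dif_pos k.isLt]]
    rw [hsum, hPhi, map_zero]
  · -- (R2) at a vertex j ≠ i
    intro j hji
    have key : ∀ j' ∈ Finset.univ.erase j, ∀ ℓ ∈ Finset.range (cnat d j j'),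
        (if j' = i then
          lpow (x j j) (cnat d j j' - 1 - ℓ) ∘ₗ prj d Vt Wt i j ∘ₗ
            Psi d Vt Wt x B i ∘ₗ x i j ∘ₗ lpow (x j j) ℓ
        else
          lpow (x j j) (cnat d j j' - 1 - ℓ) ∘ₗ x j j' ∘ₗ x j' j ∘ₗ lpow (x j j) ℓ)
        = lpow (x j j) (cnat d j j' - 1 - ℓ) ∘ₗ x j j' ∘ₗ x j' j ∘ₗ lpow (x j j) ℓ := by
      intro j' _ ℓ _
      by_cases h : j' = i
      · subst h
        rw [if_pos rfl]
        apply LinearMap.ext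
        intro z
        simp only [LinearMap.comp_apply]
        rw [prj_Psi hd hR1 hji]
      · rw [if_neg h]
    rw [Finset.sum_congr rfl (fun j' hj' => Finset.sum_congr rfl (fun ℓ hℓ =>
      key j' hj' ℓ hℓ))]
    exact hR2 j
  · -- (R3) at the vertex i
    rw [← LinearMap.comp_assoc, Ups_comp_Psi hd hR1 (hR4 i), LinearMap.comp_assoc,
      hR3 i, LinearMap.comp_zero]
  · -- (R3) at a vertex j ≠ i
    exact fun j _ => hR3 j
  · -- (R4) at the vertex i
    intro u _
    show (Ups d Vt Wt x i u).1 = 0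
    exact Ups_fst u
  · -- (R4) at a vertex j ≠ i
    exact fun j _ => hR4 j
end

section
/- Let i ∈ I and θ = (θ_i) ∈ ℝ^I with θ_i < 0, and let V be a θ-stable point of P_{v,w}. Then for every a ∈ ℤ, dim Ker Φ_i^a = w_i^{a+d_i} + Σ_{j≠i} Σ_{ℓ∈L(i,j)} v_j^{a+ℓd_{ii}} − v_i^{a+d_{ii}}. In particular, every entry of S_i(v) is a nonnegative integer. -/
/- Common setup: (graded, generalized) quiver varieties attached to a symmetrized
Cartan matrix, following Neguț, "Extremal monomials of q-characters". -/

open Module LinearMap Finset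

namespace QChar

section Aux
set_option linter.unusedSectionVars false

variable {I : Type} [Fintype I] [DecidableEq I]

theorem aux_cc_mul (d : I → I → ℤ) (hd : CartanData d) (i j : I) :
    cc d i j * d i i = 2 * d i j :=
  Int.ediv_mul_cancel (hd.dvd i j)

theorem aux_cnat_mul (d : I → I → ℤ) (hd : CartanData d) {i j : I} (hij : i ≠ j) :
    (cnat d i j : ℤ) * d i i = -(2 * d i j) := by
  have h1 := aux_cc_mul d hd i j
  have h2 : cc d i j ≤ 0 := by
    by_contra h
    push_neg at h
    nlinarith [hd.pos i, hd.offdiag i j hij]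
  rw [cnat, Int.toNat_of_nonneg (by omega)]
  linarith

theorem aux_cnat_diag (d : I → I → ℤ) (hd : CartanData d) (i : I) : cnat d i i = 0 := by
  have h : cc d i i = 2 := by
    rw [cc, Int.mul_ediv_cancel _ (hd.pos i).ne']
  rw [cnat, h]
  rfl

theorem aux_d_eq_zero (d : I → I → ℤ) (hd : CartanData d) {i j : I} (hij : i ≠ j)
    (h : cnat d i j = 0) : d i j = 0 := by
  have h2 := aux_cnat_mul d hd hij
  rw [h] at h2
  push_cast at h2
  linarith

theorem aux_two_dl (d : I → I → ℤ) (hd : CartanData d) (i : I) : 2 * dl d i = d i i :=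
  Int.mul_ediv_cancel' ((hd.even i).two_dvd)

variable (d : I → I → ℤ) (Vt : I → Type) [∀ i, AddCommGroup (Vt i)] [∀ i, Module ℂ (Vt i)]
    (Vg : ∀ i : I, ℤ → Submodule ℂ (Vt i)) (x : ∀ j i : I, Vt i →ₗ[ℂ] Vt j)

theorem aux_mem_congr {i : I} {a b : ℤ} {u : Vt i} (h : a = b) (hu : u ∈ Vg i a) :
    u ∈ Vg i b := h ▸ hu

theorem aux_x_mem (hx : ∀ j i a, (Vg i a).map (x j i) ≤ Vg j (a - d i j))
    {i : I} {a : ℤ} {u : Vt i} (hu : u ∈ Vg i a) (j : I) : x j i u ∈ Vg j (a - d i j) :=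
  hx j i a ⟨u, hu, rfl⟩

theorem aux_lpow_mem (hx : ∀ j i a, (Vg i a).map (x j i) ≤ Vg j (a - d i j))
    {i : I} (n : ℕ) :
    ∀ {a : ℤ} {u : Vt i}, u ∈ Vg i a → lpow (x i i) n u ∈ Vg i (a - n * d i i) := by
  induction n with
  | zero => intro a u hu; simpa [lpow] using hu
  | succ n ih =>
    intro a u hu
    have h := aux_x_mem d Vt Vg x hx (ih hu) i
    have : lpow (x i i) (n + 1) u = x i i (lpow (x i i) n u) := rfl
    rw [this]
    exact aux_mem_congr Vt Vg (by push_cast; ring) h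

end Aux

end QChar
namespace QChar
section Aux2
set_option linter.unusedSectionVars false
set_option maxHeartbeats 1000000

variable {I : Type} [Fintype I] [DecidableEq I]
variable (d : I → I → ℤ)
    (Vt : I → Type) [∀ i, AddCommGroup (Vt i)] [∀ i, Module ℂ (Vt i)]
    (Wt : I → Type) [∀ i, AddCommGroup (Wt i)] [∀ i, Module ℂ (Wt i)]
    (Vg : ∀ i : I, ℤ → Submodule ℂ (Vt i)) (Wg : ∀ i : I, ℤ → Submodule ℂ (Wt i))
    (x : ∀ j i : I, Vt i →ₗ[ℂ] Vt j) (A : ∀ i : I, Wt i →ₗ[ℂ] Vt i)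
    (B : ∀ i : I, Vt i →ₗ[ℂ] Wt i)

theorem aux_Phi_apply (i : I) (u : Wt i × ((j : I) → Fin (cnat d i j) → Vt j)) :
    Phi d Vt Wt x A i u =
      A i u.1 + ∑ j, ∑ k : Fin (cnat d i j), lpow (x i i) (k : ℕ) (x i j (u.2 j k)) := by
  simp [Phi, LinearMap.sum_apply, LinearMap.add_apply, LinearMap.comp_apply]

theorem aux_mem_Dg {i : I} {a : ℤ} (u : Wt i × ((j : I) → Fin (cnat d i j) → Vt j)) :
    u ∈ Dg d Vt Wt Vg Wg i a ↔ u.1 ∈ Wg i (a + dl d i) ∧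
      ∀ j (k : Fin (cnat d i j)), u.2 j k ∈ Vg j (a + d i j + ((k : ℤ) + 1) * d i i) := by
  simp [Dg, Submodule.mem_prod, Submodule.mem_pi]

theorem aux_xzero (hd : CartanData d)
    (hR1 : ∀ i j, i ≠ j →
      lpow (x j j) (cnat d j i) ∘ₗ x j i + x j i ∘ₗ lpow (x i i) (cnat d i j) = 0)
    {i j : I} (hij : i ≠ j) (h : cnat d i j = 0) : x i j = 0 := by
  have h2 : cnat d j i = 0 := by
    have e1 := aux_cnat_mul d hd hij
    have e2 := aux_cnat_mul d hd (Ne.symm hij)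
    rw [h] at e1
    push_cast at e1
    have hji : d j i = 0 := by rw [← hd.symm]; linarith
    rw [hji] at e2
    have := hd.pos j
    have : (cnat d j i : ℤ) = 0 := by
      rcases Nat.eq_zero_or_pos (cnat d j i) with h0 | h0
      · exact_mod_cast congrArg (Nat.cast : ℕ → ℤ) h0
      · nlinarith [Int.natCast_pos.mpr h0]
    exact_mod_cast this
  have := hR1 j i (Ne.symm hij)
  rw [h, h2] at this
  simp only [lpow] at this
  ext v
  have hv := LinearMap.congr_fun this v
  simp only [LinearMap.add_apply, LinearMap.comp_apply, LinearMap.id_apply,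
    LinearMap.zero_apply] at hv ⊢
  have h2s : (2 : ℂ) • x i j v = 0 := by rw [two_smul]; exact hv
  exact (smul_eq_zero.mp h2s).resolve_left (by norm_num)
theorem aux_Phi_grading (hd : CartanData d)
    (hx : ∀ j i a, (Vg i a).map (x j i) ≤ Vg j (a - d i j))
    (hA : ∀ i a, (Wg i a).map (A i) ≤ Vg i (a + dl d i))
    (i : I) (a : ℤ) (u : Wt i × ((j : I) → Fin (cnat d i j) → Vt j))
    (hu : u ∈ Dg d Vt Wt Vg Wg i a) :
    Phi d Vt Wt x A i u ∈ Vg i (a + d i i) := by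
  rw [aux_mem_Dg] at hu
  rw [aux_Phi_apply]
  apply Submodule.add_mem
  · have h1 : A i u.1 ∈ Vg i (a + dl d i + dl d i) := hA i (a + dl d i) ⟨u.1, hu.1, rfl⟩
    exact aux_mem_congr Vt Vg (by have := aux_two_dl d hd i; linarith) h1
  · apply Submodule.sum_mem
    intro j _
    apply Submodule.sum_mem
    intro k _
    have h1 := aux_x_mem d Vt Vg x hx (hu.2 j k) i
    have h2 := aux_lpow_mem d Vt Vg x hx (k : ℕ) h1
    refine aux_mem_congr Vt Vg ?_ h2
    have := hd.symm i j
    push_cast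
    ring_nf
    linarith

theorem aux_A_insert (hd : CartanData d) (i : I) (a : ℤ) (w₀ : Wt i) (hw : w₀ ∈ Wg i a) :
    A i w₀ ∈ (Dg d Vt Wt Vg Wg i (a + dl d i - d i i)).map (Phi d Vt Wt x A i) := by
  refine ⟨(w₀, 0), ?_, ?_⟩
  · refine (aux_mem_Dg d Vt Wt Vg Wg _).mpr ?_
    dsimp only
    constructor
    · exact aux_mem_congr Wt Wg (by have := aux_two_dl d hd i; linarith) hw
    · intro j k
      simp
  · rw [aux_Phi_apply]
    simp

theorem aux_slot0 (i : I) {j : I} (hk : 0 < cnat d i j) (a : ℤ) (u : Vt j)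
    (hu : u ∈ Vg j (a + d i j + d i i)) :
    x i j u ∈ (Dg d Vt Wt Vg Wg i a).map (Phi d Vt Wt x A i) := by
  refine ⟨(0, Pi.single j (fun k : Fin (cnat d i j) => if (k : ℕ) = 0 then u else 0)), ?_, ?_⟩
  · refine (aux_mem_Dg d Vt Wt Vg Wg _).mpr ?_
    dsimp only
    refine ⟨Submodule.zero_mem _, fun j' k => ?_⟩
    rcases eq_or_ne j' j with rfl | hne
    · rw [Pi.single_eq_same]
      by_cases h0 : (k : ℕ) = 0
      · rw [if_pos h0]
        refine aux_mem_congr Vt Vg ?_ hu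
        have : ((k : ℤ)) = 0 := by exact_mod_cast h0
        rw [this]; ring
      · rw [if_neg h0]; exact Submodule.zero_mem _
    · rw [Pi.single_eq_of_ne hne]
      exact Submodule.zero_mem _
  · rw [aux_Phi_apply]
    rw [Finset.sum_eq_single j]
    · rw [Fintype.sum_eq_single (⟨0, hk⟩ : Fin (cnat d i j))]
      · simp [lpow]
      · intro k hkne
        have : (k : ℕ) ≠ 0 := by
          intro h0
          exact hkne (Fin.ext h0)
        simp [this]
    · intro j' _ hne
      dsimp only
      rw [Pi.single_eq_of_ne hne]
      simp
    · intro h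
      exact absurd (Finset.mem_univ j) h
theorem aux_shift (hd : CartanData d)
    (hx : ∀ j i a, (Vg i a).map (x j i) ≤ Vg j (a - d i j))
    (hR1 : ∀ i j, i ≠ j →
      lpow (x j j) (cnat d j i) ∘ₗ x j i + x j i ∘ₗ lpow (x i i) (cnat d i j) = 0)
    (hR3 : ∀ i, x i i ∘ₗ A i = 0)
    (i : I) (a : ℤ) (u : Wt i × ((j : I) → Fin (cnat d i j) → Vt j))
    (hu : u ∈ Dg d Vt Wt Vg Wg i a) :
    x i i (Phi d Vt Wt x A i u) ∈
      (Dg d Vt Wt Vg Wg i (a - d i i)).map (Phi d Vt Wt x A i) := by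
  rw [aux_mem_Dg] at hu
  set f' : (j : I) → Fin (cnat d i j) → Vt j := fun j k =>
    if h : (k : ℕ) = 0 then
      -(lpow (x j j) (cnat d j i) (u.2 j ⟨cnat d i j - 1, Nat.sub_lt k.pos Nat.one_pos⟩))
    else u.2 j ⟨(k : ℕ) - 1, lt_of_le_of_lt (Nat.sub_le _ _) k.isLt⟩ with hf'
  have hji : ∀ j : I, 0 < cnat d i j → j ≠ i := by
    intro j h hji
    subst hji
    rw [aux_cnat_diag d hd] at h
    exact absurd h (lt_irrefl 0)
  refine ⟨(0, f'), ?_, ?_⟩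
  · refine (aux_mem_Dg d Vt Wt Vg Wg _).mpr ?_
    dsimp only
    refine ⟨Submodule.zero_mem _, fun j k => ?_⟩
    have hjne : j ≠ i := hji j k.pos
    rw [hf']
    dsimp only
    by_cases h0 : (k : ℕ) = 0
    · rw [dif_pos h0]
      apply Submodule.neg_mem
      have hmem := hu.2 j ⟨cnat d i j - 1, Nat.sub_lt k.pos Nat.one_pos⟩
      have h2 := aux_lpow_mem d Vt Vg x hx (cnat d j i) hmem
      refine aux_mem_congr Vt Vg ?_ h2
      have e1 := aux_cnat_mul d hd (fun h => hjne h.symm)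
      have e2 := aux_cnat_mul d hd hjne
      have hsym := hd.symm i j
      have h0' : ((k : ℤ)) = 0 := by exact_mod_cast h0
      have hc : (((⟨cnat d i j - 1, Nat.sub_lt k.pos Nat.one_pos⟩ : Fin (cnat d i j)) : ℕ) : ℤ)
          = (cnat d i j : ℤ) - 1 := by
        simp only [Fin.val_mk]
        have := k.pos
        omega
      rw [hc, h0']
      linear_combination e1 - e2 - 2 * hsym
    · rw [dif_neg h0]
      have hlt : (k : ℕ) - 1 < cnat d i j := lt_of_le_of_lt (Nat.sub_le _ _) k.isLt
      have hmem := hu.2 j ⟨(k : ℕ) - 1, hlt⟩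
      refine aux_mem_congr Vt Vg ?_ hmem
      have hc : (((⟨(k : ℕ) - 1, hlt⟩ : Fin (cnat d i j)) : ℕ) : ℤ) = (k : ℤ) - 1 := by
        simp only [Fin.val_mk]
        have : 0 < (k : ℕ) := Nat.pos_of_ne_zero h0
        omega
      rw [hc]
      ring
  · rw [aux_Phi_apply, aux_Phi_apply]
    dsimp only
    have hR3i := LinearMap.congr_fun (hR3 i) u.1
    simp only [LinearMap.comp_apply, LinearMap.zero_apply] at hR3i
    rw [map_zero, zero_add, map_add, hR3i, zero_add, map_sum]
    refine Finset.sum_congr rfl fun j _ => ?_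
    rw [map_sum]
    have hxl : ∀ (y : Vt i) (n : ℕ), x i i (lpow (x i i) n y) = lpow (x i i) (n + 1) y :=
      fun y n => rfl
    rcases Nat.eq_zero_or_pos (cnat d i j) with h0 | hpos
    · haveI : IsEmpty (Fin (cnat d i j)) := by rw [h0]; infer_instance
      simp
    · obtain ⟨p, hp⟩ := Nat.exists_eq_succ_of_ne_zero hpos.ne'
      have hjne : j ≠ i := hji j hpos
      set F : ℕ → Vt i := fun n =>
        if h : n < cnat d i j then lpow (x i i) n (x i j (f' j ⟨n, h⟩)) else 0 with hF
      set G : ℕ → Vt i := fun n =>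
        if h : n < cnat d i j then lpow (x i i) (n + 1) (x i j (u.2 j ⟨n, h⟩)) else 0 with hG
      have hL : (∑ k : Fin (cnat d i j), lpow (x i i) (k : ℕ) (x i j (f' j k)))
          = ∑ n ∈ Finset.range (cnat d i j), F n := by
        rw [← Fin.sum_univ_eq_sum_range F (cnat d i j)]
        refine Finset.sum_congr rfl fun k _ => ?_
        rw [hF]
        dsimp only
        rw [dif_pos k.isLt, Fin.eta]
      have hR : (∑ k : Fin (cnat d i j), x i i (lpow (x i i) (k : ℕ) (x i j (u.2 j k))))
          = ∑ n ∈ Finset.range (cnat d i j), G n := by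
        rw [← Fin.sum_univ_eq_sum_range G (cnat d i j)]
        refine Finset.sum_congr rfl fun k _ => ?_
        rw [hG]
        dsimp only
        rw [dif_pos k.isLt, Fin.eta, hxl]
      rw [hL, hR, hp, Finset.sum_range_succ' F p, Finset.sum_range_succ G p]
      congr 1
      · refine Finset.sum_congr rfl fun n hn => ?_
        have h1 : n + 1 < cnat d i j := by
          rw [hp]
          exact Nat.succ_lt_succ (Finset.mem_range.mp hn)
        have h2 : n < cnat d i j := by omega
        rw [hF, hG]
        dsimp only
        rw [dif_pos h1, dif_pos h2, hf']
        dsimp only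
        rw [dif_neg (Nat.succ_ne_zero n)]
        rfl
      · have h1 : 0 < cnat d i j := hpos
        have h2 : p < cnat d i j := by omega
        rw [hF, hG]
        dsimp only
        rw [dif_pos h1, dif_pos h2, hf']
        dsimp only
        rw [dif_pos rfl]
        have hval : cnat d i j - 1 = p := by omega
        simp only [Fin.val_mk, hval]
        have hr := LinearMap.congr_fun (hR1 j i hjne) (u.2 j ⟨p, h2⟩)
        simp only [LinearMap.add_apply, LinearMap.comp_apply, LinearMap.zero_apply] at hr
        have l0 : ∀ z : Vt i, lpow (x i i) 0 z = z := fun z => rfl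
        rw [l0, map_neg, show p + 1 = cnat d i j from hp.symm]
        exact (eq_neg_of_add_eq_zero_left hr).symm
theorem aux_finrank_prod {M N : Type} [AddCommGroup M] [Module ℂ M] [AddCommGroup N]
    [Module ℂ N] [FiniteDimensional ℂ M] [FiniteDimensional ℂ N]
    (p : Submodule ℂ M) (q : Submodule ℂ N) :
    Module.finrank ℂ (p.prod q) = Module.finrank ℂ p + Module.finrank ℂ q := by
  have e : ↥(p.prod q) ≃ₗ[ℂ] ↥p × ↥q :=
    { toFun := fun z => (⟨z.1.1, (Submodule.mem_prod.mp z.2).1⟩,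
        ⟨z.1.2, (Submodule.mem_prod.mp z.2).2⟩)
      map_add' := fun _ _ => rfl
      map_smul' := fun _ _ => rfl
      invFun := fun z => ⟨(z.1.1, z.2.1), Submodule.mem_prod.mpr ⟨z.1.2, z.2.2⟩⟩
      left_inv := fun _ => rfl
      right_inv := fun _ => rfl }
  rw [e.finrank_eq, Module.finrank_prod]

theorem aux_finrank_pi {ι : Type} [Fintype ι] [DecidableEq ι] (M : ι → Type)
    [∀ i, AddCommGroup (M i)] [∀ i, Module ℂ (M i)] [∀ i, FiniteDimensional ℂ (M i)]
    (p : ∀ i, Submodule ℂ (M i)) :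
    Module.finrank ℂ (Submodule.pi Set.univ p) = ∑ i, Module.finrank ℂ (p i) := by
  have e : ↥(Submodule.pi Set.univ p) ≃ₗ[ℂ] ∀ i, ↥(p i) :=
    { toFun := fun z i => ⟨z.1 i, z.2 i (Set.mem_univ i)⟩
      map_add' := fun _ _ => rfl
      map_smul' := fun _ _ => rfl
      invFun := fun z => ⟨fun i => (z i).1, fun i _ => (z i).2⟩
      left_inv := fun _ => rfl
      right_inv := fun _ => rfl }
  rw [e.finrank_eq, Module.finrank_pi_fintype]

theorem aux_finrank_Dg (v w : I → ℤ → ℕ)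
    (hfV : ∀ i, FiniteDimensional ℂ (Vt i)) (hfW : ∀ i, FiniteDimensional ℂ (Wt i))
    (hdV : ∀ i a, Module.finrank ℂ (Vg i a) = v i a)
    (hdW : ∀ i a, Module.finrank ℂ (Wg i a) = w i a)
    (i : I) (a : ℤ) :
    Module.finrank ℂ (Dg d Vt Wt Vg Wg i a) =
      w i (a + dl d i) + ∑ j, ∑ k ∈ Finset.range (cnat d i j),
        v j (a + d i j + ((k : ℤ) + 1) * d i i) := by
  haveI := hfV
  haveI := hfW
  rw [Dg, aux_finrank_prod, hdW]
  congr 1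
  rw [aux_finrank_pi]
  refine Finset.sum_congr rfl fun j _ => ?_
  rw [aux_finrank_pi]
  rw [← Fin.sum_univ_eq_sum_range (fun k => v j (a + d i j + ((k : ℤ) + 1) * d i i))]
  exact Finset.sum_congr rfl fun k _ => hdV j _

end Aux2
end QChar

set_option maxHeartbeats 1000000 in
open QChar in
/-- if `θ_i < 0` and the point is `θ`-stable, then
`dim Ker Φ_i^a = w_i^{a+d_i} + Σ_{j≠i} Σ_{ℓ∈L(i,j)} v_j^{a+ℓd_{ii}} − v_i^{a+d_{ii}}`,
i.e. `dim Ker Φ_i^a = S_i(v)_i^a`; in particular all entries of `S_i(v)` are nonnegative. -/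
theorem extremal_qchar_stmt5 {I : Type} [Fintype I] [DecidableEq I]
    (d : I → I → ℤ) (v w : I → ℤ → ℕ)
    (Vt : I → Type) [∀ i, AddCommGroup (Vt i)] [∀ i, Module ℂ (Vt i)]
    (Wt : I → Type) [∀ i, AddCommGroup (Wt i)] [∀ i, Module ℂ (Wt i)]
    (Vg : ∀ i : I, ℤ → Submodule ℂ (Vt i)) (Wg : ∀ i : I, ℤ → Submodule ℂ (Wt i))
    (x : ∀ j i : I, Vt i →ₗ[ℂ] Vt j) (A : ∀ i : I, Wt i →ₗ[ℂ] Vt i)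
    (B : ∀ i : I, Vt i →ₗ[ℂ] Wt i)
    (hd : QChar.CartanData d)
    (hv : (Function.support fun p : I × ℤ => v p.1 p.2).Finite)
    (hw : (Function.support fun p : I × ℤ => w p.1 p.2).Finite)
    (hrep : QChar.IsRep d v w Vt Wt Vg Wg x A B)
    (i : I) (θ : I → ℝ) (hθi : θ i < 0)
    (hstab : QChar.IsStable d v Vt Wt Vg Wg x A B θ) :
    (∀ a : ℤ,
      ((Module.finrank ℂ
        ↥(QChar.Dg d Vt Wt Vg Wg i a ⊓ LinearMap.ker (QChar.Phi d Vt Wt x A i)) : ℕ) : ℤ)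
        = QChar.SS d w i (fun j b => (v j b : ℤ)) i a) ∧
    (∀ j a, 0 ≤ QChar.SS d w i (fun j b => (v j b : ℤ)) j a) := by
  classical
  obtain ⟨hfV, hfW, hVi, hWi, hdV, hdW, hxg, hAg, hBg, hR1, hR2, hR3, hR4⟩ := hrep
  haveI := hfV
  haveI := hfW
  set Φ := QChar.Phi d Vt Wt x A i with hΦ
  set U : ∀ j : I, ℤ → Submodule ℂ (Vt j) :=
    Function.update Vg i (fun b => (QChar.Dg d Vt Wt Vg Wg i (b - d i i)).map Φ) with hU
  have hUi : ∀ b, U i b = (QChar.Dg d Vt Wt Vg Wg i (b - d i i)).map Φ := by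
    intro b; rw [hU, Function.update_self]
  have hUo : ∀ j, j ≠ i → ∀ b, U j b = Vg j b := by
    intro j hj b; rw [hU, Function.update_of_ne hj]
  have hUle : ∀ j b, U j b ≤ Vg j b := by
    intro j b
    by_cases hj : j = i
    · subst hj
      rw [hUi]
      rintro _ ⟨u, hu, rfl⟩
      exact QChar.aux_mem_congr Vt Vg (by ring)
        (QChar.aux_Phi_grading d Vt Wt Vg Wg x A hd hxg hAg j _ u hu)
    · rw [hUo j hj]
  have hsub : QChar.IsSubrep d Vt Vg x U := by
    refine ⟨hUle, ?_⟩
    intro j₀ i₀ b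
    by_cases hi₀ : i₀ = i
    · by_cases hj₀ : j₀ = i
      · rw [hi₀, hj₀, hUi, hUi]
        rintro _ ⟨_, ⟨u, hu, rfl⟩, rfl⟩
        exact QChar.aux_shift d Vt Wt Vg Wg x A hd hxg hR1 hR3 i (b - d i i) u hu
      · rw [hi₀, hUo j₀ hj₀]
        exact le_trans (Submodule.map_mono (hUle i b)) (hxg j₀ i b)
    · by_cases hj₀ : j₀ = i
      · rw [hj₀, hUo i₀ hi₀, hUi]
        rcases Nat.eq_zero_or_pos (QChar.cnat d i i₀) with h0 | hpos
        · rw [QChar.aux_xzero d Vt x hd hR1 (fun h => hi₀ h.symm) h0]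
          simp
        · rintro _ ⟨y, hy, rfl⟩
          have hy' : y ∈ Vg i₀ (b - d i₀ i - d i i + d i i₀ + d i i) :=
            QChar.aux_mem_congr Vt Vg (by rw [hd.symm i₀ i]; ring) hy
          exact QChar.aux_slot0 d Vt Wt Vg Wg x A i hpos _ y hy'
      · rw [hUo i₀ hi₀, hUo j₀ hj₀]
        exact hxg j₀ i₀ b
  have hImA : ∀ j b, (Wg j b).map (A j) ≤ U j (b + QChar.dl d j) := by
    intro j b
    by_cases hj : j = i
    · subst hj
      rw [hUi]
      rintro _ ⟨w₀, hw₀, rfl⟩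
      exact QChar.aux_A_insert d Vt Wt Vg Wg x A hd j b w₀ hw₀
    · rw [hUo j hj]
      exact hAg j b
  have key := hstab.2 U hsub hImA
  -- analyze pairθ
  rw [QChar.pairθ] at key
  rw [Finset.sum_eq_single_of_mem i (Finset.mem_univ i) ?side] at key
  case side =>
    intro j _ hj
    have hz : ∀ b : ℤ, ((((v j b : ℤ) - QChar.dimv Vt U j b : ℤ)) : ℝ) = 0 := by
      intro b
      simp only [QChar.dimv]
      rw [hUo j hj b, hdV]
      push_cast
      ring
    rw [finsum_congr hz, finsum_zero, mul_zero]
  have htnn : ∀ b : ℤ, (0 : ℝ) ≤ (((v i b : ℤ) - QChar.dimv Vt U i b : ℤ) : ℝ) := by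
    intro b
    have h1 : Module.finrank ℂ (U i b) ≤ Module.finrank ℂ (Vg i b) :=
      Submodule.finrank_mono (hUle i b)
    rw [hdV] at h1
    simp only [QChar.dimv]
    push_cast
    have : (Module.finrank ℂ (U i b) : ℝ) ≤ (v i b : ℝ) := by exact_mod_cast h1
    linarith
  have hsupp : (Function.support fun b : ℤ =>
      (((v i b : ℤ) - QChar.dimv Vt U i b : ℤ) : ℝ)).Finite := by
    have hfin : ({b : ℤ | v i b ≠ 0}).Finite := by
      have hinj : Function.Injective (fun b : ℤ => ((i, b) : I × ℤ)) := by
        intro a b h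
        exact (Prod.ext_iff.mp h).2
      exact hv.preimage (Set.injOn_of_injective hinj)
    refine hfin.subset ?_
    intro b hb
    simp only [Function.mem_support] at hb
    simp only [Set.mem_setOf_eq]
    intro hb0
    apply hb
    have hVg : Vg i b = ⊥ := Submodule.finrank_eq_zero.mp (by rw [hdV, hb0])
    have hUb : U i b = ⊥ := le_bot_iff.mp (hVg ▸ hUle i b)
    simp [QChar.dimv, hUb, hb0]
  have hdl : 0 < QChar.dl d i := by
    have h1 := hd.pos i
    obtain ⟨r, hr⟩ := hd.even i
    simp only [QChar.dl]
    omega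
  have hS0 : (0 : ℝ) ≤ ∑ᶠ b : ℤ, (((v i b : ℤ) - QChar.dimv Vt U i b : ℤ) : ℝ) :=
    finsum_nonneg htnn
  have hcθ : ((QChar.dl d i : ℝ)) * θ i < 0 := by
    apply mul_neg_of_pos_of_neg _ hθi
    exact_mod_cast hdl
  have hS : ∑ᶠ b : ℤ, (((v i b : ℤ) - QChar.dimv Vt U i b : ℤ) : ℝ) = 0 := by
    nlinarith [key, hS0, hcθ]
  have hUeq : ∀ b, U i b = Vg i b := by
    intro b
    have hle := single_le_finsum b hsupp htnn
    rw [hS] at hle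
    have h0 := le_antisymm hle (htnn b)
    simp only [QChar.dimv] at h0
    have h1 : (Module.finrank ℂ (U i b) : ℝ) = (v i b : ℝ) := by push_cast at h0; linarith
    have h2 : Module.finrank ℂ (U i b) = v i b := by exact_mod_cast h1
    exact Submodule.eq_of_le_of_finrank_eq (hUle i b) (by rw [h2, hdV])
  have main : ∀ a : ℤ,
      ((Module.finrank ℂ
        ↥(QChar.Dg d Vt Wt Vg Wg i a ⊓ LinearMap.ker Φ) : ℕ) : ℤ)
        = QChar.SS d w i (fun j b => (v j b : ℤ)) i a := by
    intro a
    have hsurj : (QChar.Dg d Vt Wt Vg Wg i a).map Φ = Vg i (a + d i i) := by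
      have h1 := hUeq (a + d i i)
      rw [hUi] at h1
      have he : a + d i i - d i i = a := by ring
      rw [he] at h1
      exact h1
    have hrn := LinearMap.finrank_range_add_finrank_ker
      (Φ.domRestrict (QChar.Dg d Vt Wt Vg Wg i a))
    rw [LinearMap.range_domRestrict, hsurj] at hrn
    have hker : Module.finrank ℂ
        (LinearMap.ker (Φ.domRestrict (QChar.Dg d Vt Wt Vg Wg i a)))
        = Module.finrank ℂ ↥(QChar.Dg d Vt Wt Vg Wg i a ⊓ LinearMap.ker Φ) := by
      rw [LinearMap.ker_domRestrict, ← Submodule.finrank_map_subtype_eq,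
        Submodule.map_comap_subtype]
    rw [hker, hdV, QChar.aux_finrank_Dg d Vt Wt Vg Wg v w hfV hfW hdV hdW i a] at hrn
    have herase : (∑ j ∈ Finset.univ.erase i, ∑ k ∈ Finset.range (QChar.cnat d i j),
          (v j (a + d i j + ((k : ℤ) + 1) * d i i) : ℤ))
        = ∑ j, ∑ k ∈ Finset.range (QChar.cnat d i j),
          (v j (a + d i j + ((k : ℤ) + 1) * d i i) : ℤ) :=
      Finset.sum_erase _ (by rw [QChar.aux_cnat_diag d hd i]; simp)
    simp only [QChar.SS, if_pos rfl]
    rw [herase]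
    push_cast at hrn ⊢
    linarith [hrn]
  refine ⟨main, ?_⟩
  intro j a
  rcases eq_or_ne j i with rfl | hj
  · rw [← main a]
    exact Int.natCast_nonneg _
  · simp only [QChar.SS, if_neg hj]
    exact Int.natCast_nonneg _
end
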